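/- arXiv:0902.4036 — 5 statements merged into one kernel-verified Lean document; each statement's English description precedes it below -/
import Mathlib

section
/- (Symmetry of leakage.) For every embedding ψ of a primitive P (with arbitrary finite ancilla types 𝒜', ℬ'), the two sides of the leakage coincide: S(X;BB') − I(X;Y) = S(AA';Y) − I(X;Y), i.e. S(X;BB') = S(AA';Y). -/
open scoped BigOperators
open Matrix

noncomputable section

open scoped Classical in
/-- Base-2 von Neumann entropy of a matrix: minus the sum of `λ·log₂ λ` over the real
eigenvalues (with multiplicity) if the matrix is Hermitian, and `0` otherwise. -/
def vNE {n : Type*} [Fintype n] (ρ : Matrix n n ℂ) : ℝ :=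
  if h : ρ.IsHermitian then -∑ i, h.eigenvalues i * Real.logb 2 (h.eigenvalues i) else 0

/-- Shannon entropy (base 2), with the convention `0·log₂ 0 = 0`. -/
def shannon {α : Type*} [Fintype α] (p : α → ℝ) : ℝ :=
  -∑ a, p a * Real.logb 2 (p a)

/-- Marginal on the first component: `P_X`. -/
def margX {X Y : Type*} [Fintype Y] (P : X × Y → ℝ) (x : X) : ℝ := ∑ y, P (x, y)

/-- Marginal on the second component: `P_Y`. -/
def margY {X Y : Type*} [Fintype X] (P : X × Y → ℝ) (y : Y) : ℝ := ∑ x, P (x, y)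

/-- Mutual information `I(X;Y)` of a joint distribution `P` (base 2). -/
def mutualInfo {X Y : Type*} [Fintype X] [Fintype Y] (P : X × Y → ℝ) : ℝ :=
  ∑ x, ∑ y, P (x, y) * Real.logb 2 (P (x, y) / (margX P x * margY P y))

/-- The regular embedding `ψ_θ(x,y) = e^{iθ(x,y)}·√(P(x,y))`. -/
def regEmb {X Y : Type*} (P θ : X × Y → ℝ) (xy : X × Y) : ℂ :=
  Complex.exp (Complex.I * θ xy) * (Real.sqrt (P xy) : ℂ)

/-- Reduced density matrix `ρ_A(θ)` of the regular embedding `ψ_θ`. -/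
def rhoA {X Y : Type*} [Fintype Y] (P θ : X × Y → ℝ) : Matrix X X ℂ :=
  Matrix.of fun x x' => ∑ y, regEmb P θ (x, y) * star (regEmb P θ (x', y))

/-- Reduced density matrix `ρ_B(θ)` of the regular embedding `ψ_θ`. -/
def rhoB {X Y : Type*} [Fintype X] (P θ : X × Y → ℝ) : Matrix Y Y ℂ :=
  Matrix.of fun y y' => ∑ x, regEmb P θ (x, y) * star (regEmb P θ (x, y'))

/-- Leakage `Δ(ψ_θ) = S(ρ_B(θ)) − I(X;Y)` of a regular embedding. -/
def leakReg {X Y : Type*} [Fintype X] [Fintype Y] (P θ : X × Y → ℝ) : ℝ :=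
  vNE (rhoB P θ) - mutualInfo P

/-- Leakage `Δ_P` of a primitive: the infimum of the leakage over all phase functions. -/
def leakPrim {X Y : Type*} [Fintype X] [Fintype Y] (P : X × Y → ℝ) : ℝ :=
  ⨅ θ : X × Y → ℝ, leakReg P θ

section Embedding

variable {𝒳 𝒴 𝒜 ℬ : Type*} [Fintype 𝒳] [Fintype 𝒴] [Fintype 𝒜] [Fintype ℬ]

/-- Reduced state `ρ_{BB'}` of an embedding `ψ ∈ ℂ^{𝒳×𝒴×𝒜'×ℬ'}`. -/
def rhoBB' (ψ : 𝒳 → 𝒴 → 𝒜 → ℬ → ℂ) : Matrix (𝒴 × ℬ) (𝒴 × ℬ) ℂ :=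
  Matrix.of fun p q => ∑ x, ∑ a, ψ x p.1 a p.2 * star (ψ x q.1 a q.2)

open scoped Classical in
/-- cq-state `ρ_{X,BB'}`: block-diagonal over `x`. -/
def rhoXBB' (ψ : 𝒳 → 𝒴 → 𝒜 → ℬ → ℂ) : Matrix (𝒳 × 𝒴 × ℬ) (𝒳 × 𝒴 × ℬ) ℂ :=
  Matrix.of fun p q =>
    if p.1 = q.1 then ∑ a, ψ p.1 p.2.1 a p.2.2 * star (ψ p.1 q.2.1 a q.2.2) else 0

open scoped Classical in
/-- cq-state `ρ_{Y,B'}`: block-diagonal over `y`. -/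
def rhoYB' (ψ : 𝒳 → 𝒴 → 𝒜 → ℬ → ℂ) : Matrix (𝒴 × ℬ) (𝒴 × ℬ) ℂ :=
  Matrix.of fun p q =>
    if p.1 = q.1 then ∑ x, ∑ a, ψ x p.1 a p.2 * star (ψ x p.1 a q.2) else 0

open scoped Classical in
/-- ccq-state `ρ_{X,Y,B'}`: block-diagonal over `(x,y)`. -/
def rhoXYB' (ψ : 𝒳 → 𝒴 → 𝒜 → ℬ → ℂ) : Matrix (𝒳 × 𝒴 × ℬ) (𝒳 × 𝒴 × ℬ) ℂ :=
  Matrix.of fun p q =>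
    if p.1 = q.1 ∧ p.2.1 = q.2.1 then
      ∑ a, ψ p.1 p.2.1 a p.2.2 * star (ψ p.1 p.2.1 a q.2.2)
    else 0

/-- Reduced state `ρ_{AA'}`. -/
def rhoAA' (ψ : 𝒳 → 𝒴 → 𝒜 → ℬ → ℂ) : Matrix (𝒳 × 𝒜) (𝒳 × 𝒜) ℂ :=
  Matrix.of fun p q => ∑ y, ∑ b, ψ p.1 y p.2 b * star (ψ q.1 y q.2 b)

open scoped Classical in
/-- cq-state `ρ_{X,A'}`: block-diagonal over `x`. -/
def rhoXA' (ψ : 𝒳 → 𝒴 → 𝒜 → ℬ → ℂ) : Matrix (𝒳 × 𝒜) (𝒳 × 𝒜) ℂ :=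
  Matrix.of fun p q =>
    if p.1 = q.1 then ∑ y, ∑ b, ψ p.1 y p.2 b * star (ψ p.1 y q.2 b) else 0

open scoped Classical in
/-- state `ρ_{X,A',Y}`: block-diagonal over `(x,y)`. -/
def rhoXA'Y (ψ : 𝒳 → 𝒴 → 𝒜 → ℬ → ℂ) : Matrix (𝒳 × 𝒜 × 𝒴) (𝒳 × 𝒜 × 𝒴) ℂ :=
  Matrix.of fun p q =>
    if p.1 = q.1 ∧ p.2.2 = q.2.2 then
      ∑ b, ψ p.1 p.2.2 p.2.1 b * star (ψ p.1 p.2.2 q.2.1 b)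
    else 0

open scoped Classical in
/-- state `ρ_{AA',Y}`: block-diagonal over `y`. -/
def rhoAA'Y (ψ : 𝒳 → 𝒴 → 𝒜 → ℬ → ℂ) : Matrix (𝒳 × 𝒜 × 𝒴) (𝒳 × 𝒜 × 𝒴) ℂ :=
  Matrix.of fun p q =>
    if p.2.2 = q.2.2 then ∑ b, ψ p.1 p.2.2 p.2.1 b * star (ψ q.1 q.2.2 q.2.1 b) else 0

/-- Quantum mutual information `S(X;BB') = H(P_X) + S(ρ_{BB'}) − S(ρ_{X,BB'})`. -/
def SXBB' (P : 𝒳 × 𝒴 → ℝ) (ψ : 𝒳 → 𝒴 → 𝒜 → ℬ → ℂ) : ℝ :=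
  shannon (margX P) + vNE (rhoBB' ψ) - vNE (rhoXBB' ψ)

/-- Quantum mutual information `S(X;YB') = H(P_X) + S(ρ_{Y,B'}) − S(ρ_{X,Y,B'})`. -/
def SXYB' (P : 𝒳 × 𝒴 → ℝ) (ψ : 𝒳 → 𝒴 → 𝒜 → ℬ → ℂ) : ℝ :=
  shannon (margX P) + vNE (rhoYB' ψ) - vNE (rhoXYB' ψ)

/-- Quantum mutual information `S(XA';Y) = S(ρ_{X,A'}) + H(P_Y) − S(ρ_{X,A',Y})`. -/
def SXA'Y (P : 𝒳 × 𝒴 → ℝ) (ψ : 𝒳 → 𝒴 → 𝒜 → ℬ → ℂ) : ℝ :=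
  vNE (rhoXA' ψ) + shannon (margY P) - vNE (rhoXA'Y ψ)

/-- Quantum mutual information `S(AA';Y) = S(ρ_{AA'}) + H(P_Y) − S(ρ_{AA',Y})`. -/
def SAA'Y (P : 𝒳 × 𝒴 → ℝ) (ψ : 𝒳 → 𝒴 → 𝒜 → ℬ → ℂ) : ℝ :=
  vNE (rhoAA' ψ) + shannon (margY P) - vNE (rhoAA'Y ψ)

/-- `ψ` is an embedding of the primitive `P`: it reproduces `P` upon measurement of the
`𝒳,𝒴` registers in the computational basis, and satisfies the correctness conditions
`S(X;YB') = I(X;Y)` and `S(XA';Y) = I(X;Y)`. -/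
def IsEmbedding (P : 𝒳 × 𝒴 → ℝ) (ψ : 𝒳 → 𝒴 → 𝒜 → ℬ → ℂ) : Prop :=
  (∀ x y, ∑ a, ∑ b, ‖ψ x y a b‖ ^ 2 = P (x, y)) ∧
    SXYB' P ψ = mutualInfo P ∧ SXA'Y P ψ = mutualInfo P

end Embedding

/-! Purify the classical registers by coherent copies, e.g. `Σ ψ(x,y,a',b') |x a'⟩|x y b'⟩` for
`ρ_{X,BB'}`. Then `ρ_{BB'}`, `ρ_{X,BB'}`, `ρ_{X,Y,B'}`, `ρ_{AA',Y}` are of the form `K Kᴴ`, and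
`ρ_{AA'}`, `ρ_{X,A'}`, `ρ_{X,A',Y}`, `ρ_{Y,B'}` are the complementary marginals `(Kᴴ K)ᵀ` of the
same pure states. Complementary marginals share their nonzero spectrum, hence their entropy, and
the four equalities give `S(X;BB') − S(AA';Y) = S(X;YB') − S(XA';Y)`, which vanishes for an
embedding. -/

namespace Matrix

variable {m n : Type*} [Fintype m] [Fintype n]

open scoped Classical in
lemma IsHermitian.vNE_eq_neg_sum_roots_charpoly {A : Matrix n n ℂ} (hA : A.IsHermitian) :
    vNE A = -(A.charpoly.roots.map fun z : ℂ => z.re * Real.logb 2 z.re).sum := by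
  rw [vNE, dif_pos hA, hA.roots_charpoly_eq_eigenvalues, Multiset.map_map,
    Finset.sum_eq_multiset_sum]
  simp [Function.comp_def]

lemma vNE_transpose (A : Matrix n n ℂ) : vNE Aᵀ = vNE A := by
  classical
  by_cases hA : A.IsHermitian
  · rw [hA.vNE_eq_neg_sum_roots_charpoly, hA.transpose.vNE_eq_neg_sum_roots_charpoly,
      charpoly_transpose]
  · have hAt : ¬ Aᵀ.IsHermitian := fun h => hA (by simpa using h.transpose)
    rw [vNE, vNE, dif_neg hA, dif_neg hAt]

/-- The zero eigenvalues by which the spectra of `K Kᴴ` and `Kᴴ K` differ carry no entropy. -/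
lemma vNE_mul_conjTranspose_self (K : Matrix m n ℂ) : vNE (K * Kᴴ) = vNE (Kᴴ * K) := by
  classical
  have hroots : (K * Kᴴ).charpoly.roots + Multiset.replicate (Fintype.card n) 0 =
      (Kᴴ * K).charpoly.roots + Multiset.replicate (Fintype.card m) 0 := by
    have h := congrArg Polynomial.roots (charpoly_mul_comm' K Kᴴ)
    rwa [Polynomial.roots_mul ((Polynomial.monic_X_pow _).mul (charpoly_monic _)).ne_zero,
      Polynomial.roots_mul ((Polynomial.monic_X_pow _).mul (charpoly_monic _)).ne_zero,
      Polynomial.roots_X_pow, Polynomial.roots_X_pow, Multiset.nsmul_singleton,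
      Multiset.nsmul_singleton, add_comm (Multiset.replicate _ _),
      add_comm (Multiset.replicate _ _)] at h
  have hsum := congrArg
    (fun s : Multiset ℂ => (s.map fun z : ℂ => z.re * Real.logb 2 z.re).sum) hroots
  simp only [Multiset.map_add, Multiset.sum_add, Multiset.map_replicate, Complex.zero_re,
    zero_mul, Multiset.sum_replicate, smul_zero, add_zero] at hsum
  rw [(isHermitian_mul_conjTranspose_self K).vNE_eq_neg_sum_roots_charpoly,
    (isHermitian_conjTranspose_mul_self K).vNE_eq_neg_sum_roots_charpoly, hsum]

lemma vNE_mul_conjTranspose_self_eq_transpose (K : Matrix m n ℂ) :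
    vNE (K * Kᴴ) = vNE (Kᴴ * K)ᵀ := by
  rw [vNE_transpose, vNE_mul_conjTranspose_self]

end Matrix

section Embedding

open scoped Classical

variable {𝒳 𝒴 𝒜 ℬ : Type*} [Fintype 𝒳] [Fintype 𝒴] [Fintype 𝒜] [Fintype ℬ]
  (ψ : 𝒳 → 𝒴 → 𝒜 → ℬ → ℂ)

lemma vNE_rhoBB'_eq_vNE_rhoAA' : vNE (rhoBB' ψ) = vNE (rhoAA' ψ) := by
  let K : Matrix (𝒴 × ℬ) (𝒳 × 𝒜) ℂ := of fun p q => ψ q.1 p.1 q.2 p.2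
  have hB : rhoBB' ψ = K * Kᴴ := by
    ext ⟨y, b⟩ ⟨y', b'⟩
    simp [K, rhoBB', mul_apply, Fintype.sum_prod_type]
  have hA : rhoAA' ψ = (Kᴴ * K)ᵀ := by
    ext ⟨x, a⟩ ⟨x', a'⟩
    simp [K, rhoAA', mul_apply, Fintype.sum_prod_type, mul_comm]
  rw [hB, hA, Matrix.vNE_mul_conjTranspose_self_eq_transpose]

lemma vNE_rhoXBB'_eq_vNE_rhoXA' : vNE (rhoXBB' ψ) = vNE (rhoXA' ψ) := by
  let K : Matrix (𝒳 × 𝒴 × ℬ) (𝒳 × 𝒜) ℂ :=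
    of fun p q => if p.1 = q.1 then ψ p.1 p.2.1 q.2 p.2.2 else 0
  have hB : rhoXBB' ψ = K * Kᴴ := by
    ext ⟨x, y, b⟩ ⟨x', y', b'⟩
    by_cases h : x = x' <;>
      simp [K, rhoXBB', mul_apply, Fintype.sum_prod_type, apply_ite (star : ℂ → ℂ), h]
  have hA : rhoXA' ψ = (Kᴴ * K)ᵀ := by
    ext ⟨x, a⟩ ⟨x', a'⟩
    by_cases h : x = x' <;>
      simp [K, rhoXA', mul_apply, Fintype.sum_prod_type, apply_ite (star : ℂ → ℂ), ite_mul,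
        mul_ite, h, mul_comm, eq_comm]
  rw [hB, hA, Matrix.vNE_mul_conjTranspose_self_eq_transpose]

lemma vNE_rhoXYB'_eq_vNE_rhoXA'Y : vNE (rhoXYB' ψ) = vNE (rhoXA'Y ψ) := by
  let K : Matrix (𝒳 × 𝒴 × ℬ) (𝒳 × 𝒜 × 𝒴) ℂ :=
    of fun p q => if p.1 = q.1 ∧ p.2.1 = q.2.2 then ψ p.1 p.2.1 q.2.1 p.2.2 else 0
  have hB : rhoXYB' ψ = K * Kᴴ := by
    ext ⟨x, y, b⟩ ⟨x', y', b'⟩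
    by_cases hx : x = x' <;> by_cases hy : y = y' <;>
      simp [K, rhoXYB', mul_apply, Fintype.sum_prod_type, apply_ite (star : ℂ → ℂ), ite_mul,
        mul_ite, ite_and, hx, hy]
  have hA : rhoXA'Y ψ = (Kᴴ * K)ᵀ := by
    ext ⟨x, a, y⟩ ⟨x', a', y'⟩
    by_cases hx : x = x' <;> by_cases hy : y = y' <;>
      simp [K, rhoXA'Y, mul_apply, Fintype.sum_prod_type, apply_ite (star : ℂ → ℂ), ite_mul,
        mul_ite, ite_and, hx, hy, mul_comm, eq_comm]
  rw [hB, hA, Matrix.vNE_mul_conjTranspose_self_eq_transpose]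

lemma vNE_rhoAA'Y_eq_vNE_rhoYB' : vNE (rhoAA'Y ψ) = vNE (rhoYB' ψ) := by
  let K : Matrix (𝒳 × 𝒜 × 𝒴) (𝒴 × ℬ) ℂ :=
    of fun p q => if p.2.2 = q.1 then ψ p.1 p.2.2 p.2.1 q.2 else 0
  have hA : rhoAA'Y ψ = K * Kᴴ := by
    ext ⟨x, a, y⟩ ⟨x', a', y'⟩
    by_cases h : y = y' <;>
      simp [K, rhoAA'Y, mul_apply, Fintype.sum_prod_type, apply_ite (star : ℂ → ℂ), ite_mul,
        mul_ite, h]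
  have hB : rhoYB' ψ = (Kᴴ * K)ᵀ := by
    ext ⟨y, b⟩ ⟨y', b'⟩
    by_cases h : y = y' <;>
      simp [K, rhoYB', mul_apply, Fintype.sum_prod_type, apply_ite (star : ℂ → ℂ), ite_mul,
        mul_ite, h, mul_comm, eq_comm]
  rw [hA, hB, Matrix.vNE_mul_conjTranspose_self_eq_transpose]

lemma SXBB'_sub_SAA'Y (P : 𝒳 × 𝒴 → ℝ) :
    SXBB' P ψ - SAA'Y P ψ = SXYB' P ψ - SXA'Y P ψ := by
  simp only [SXBB', SAA'Y, SXYB', SXA'Y, vNE_rhoBB'_eq_vNE_rhoAA', vNE_rhoXBB'_eq_vNE_rhoXA',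
    vNE_rhoXYB'_eq_vNE_rhoXA'Y, vNE_rhoAA'Y_eq_vNE_rhoYB']
  ring

end Embedding

theorem leakage_symmetry_general
    {𝒳 𝒴 𝒜' ℬ' : Type*} [Fintype 𝒳] [Fintype 𝒴] [Fintype 𝒜'] [Fintype ℬ']
    (P : 𝒳 × 𝒴 → ℝ)
    (ψ : 𝒳 → 𝒴 → 𝒜' → ℬ' → ℂ) (hψ : IsEmbedding P ψ) :
    SXBB' P ψ = SAA'Y P ψ := by
  obtain ⟨-, hXYB', hXA'Y⟩ := hψ
  linarith [SXBB'_sub_SAA'Y ψ P]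

/-- **Symmetry of leakage.** For every embedding `ψ` of a primitive `P`,
`S(X;BB') − I(X;Y) = S(AA';Y) − I(X;Y)`, i.e. `S(X;BB') = S(AA';Y)`. -/
theorem leakage_symmetry
    {𝒳 𝒴 𝒜' ℬ' : Type*} [Fintype 𝒳] [Fintype 𝒴] [Fintype 𝒜'] [Fintype ℬ']
    [Nonempty 𝒳] [Nonempty 𝒴] [Nonempty 𝒜'] [Nonempty ℬ']
    (P : 𝒳 × 𝒴 → ℝ) (hP0 : ∀ xy, 0 ≤ P xy) (hP1 : ∑ xy, P xy = 1)
    (ψ : 𝒳 → 𝒴 → 𝒜' → ℬ' → ℂ) (hψ : IsEmbedding P ψ) :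
    SXBB' P ψ = SAA'Y P ψ :=
  leakage_symmetry_general P ψ hψ
end
end

section
/- If P is a non-trivial primitive, then its canonical embedding (the regular embedding with phase function θ ≡ 0) is non-trivial; that is, both quantum conditional entropies are strictly positive: S(X↘Y|B) = S(ρ_{KB}) − S(ρ_B) > 0 and S(Y↘X|A) = S(ρ_{LA}) − S(ρ_A) > 0. -/
open scoped BigOperators
open Matrix

noncomputable section

/-- `f_X(x) = P_{Y|X=x}`, the conditional distribution of `Y` given `X = x`. -/
def fX {X Y : Type*} [Fintype Y] (P : X × Y → ℝ) (x : X) : Y → ℝ :=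
  fun y => P (x, y) / margX P x

/-- `f_Y(y) = P_{X|Y=y}`, the conditional distribution of `X` given `Y = y`. -/
def fY {X Y : Type*} [Fintype X] (P : X × Y → ℝ) (y : Y) : X → ℝ :=
  fun x => P (x, y) / margY P y

open scoped Classical in
/-- Shannon entropy `H(P_{f_X(X),Y})` of the joint distribution of the pair `(f_X(X), Y)`. -/
def entDepJoint {X Y : Type*} [Fintype X] [Fintype Y] (P : X × Y → ℝ) : ℝ :=
  -∑ k ∈ Finset.image (fX P) Finset.univ, ∑ y,
      (∑ x ∈ Finset.univ.filter fun x => fX P x = k, P (x, y)) *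
        Real.logb 2 (∑ x ∈ Finset.univ.filter fun x => fX P x = k, P (x, y))

/-- Conditional Shannon entropy `H(X↘Y|Y) = H(P_{f_X(X),Y}) − H(P_Y)`. -/
def condEntDep {X Y : Type*} [Fintype X] [Fintype Y] (P : X × Y → ℝ) : ℝ :=
  entDepJoint P - shannon (margY P)

/-- Bob's reduced state `ρ_B = Σ_x P_X(x)·|φ_x⟩⟨φ_x|` of the canonical embedding,
where `φ_x(y) = √(P(x,y)/P_X(x))`. -/
def rhoBcan {𝒳 𝒴 : Type*} [Fintype 𝒳] [Fintype 𝒴] (P : 𝒳 × 𝒴 → ℝ) : Matrix 𝒴 𝒴 ℂ :=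
  Matrix.of fun y y' =>
    ((∑ x, margX P x * (Real.sqrt (P (x, y) / margX P x) *
        Real.sqrt (P (x, y') / margX P x)) : ℝ) : ℂ)

/-- Alice's reduced state `ρ_A = Σ_y P_Y(y)·|φ'_y⟩⟨φ'_y|` of the canonical embedding,
where `φ'_y(x) = √(P(x,y)/P_Y(y))`. -/
def rhoAcan {𝒳 𝒴 : Type*} [Fintype 𝒳] [Fintype 𝒴] (P : 𝒳 × 𝒴 → ℝ) : Matrix 𝒳 𝒳 ℂ :=
  Matrix.of fun x x' =>
    ((∑ y, margY P y * (Real.sqrt (P (x, y) / margY P y) *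
        Real.sqrt (P (x', y) / margY P y)) : ℝ) : ℂ)

open scoped Classical in
/-- The cq-state `ρ_{KB}`: block-diagonal over the distinct values `k` of `f_X` on the
support of `P_X`, with `k`-block `Σ_{x : f_X(x)=k} P_X(x)·|φ_x⟩⟨φ_x|`. -/
def rhoKB {𝒳 𝒴 : Type*} [Fintype 𝒳] [Fintype 𝒴] (P : 𝒳 × 𝒴 → ℝ) :
    Matrix (↥(Finset.image (fX P) (Finset.univ.filter fun x => 0 < margX P x)) × 𝒴)
           (↥(Finset.image (fX P) (Finset.univ.filter fun x => 0 < margX P x)) × 𝒴) ℂ :=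
  Matrix.of fun p q =>
    if p.1 = q.1 then
      ((∑ x ∈ Finset.univ.filter fun x => 0 < margX P x ∧ fX P x = (p.1 : 𝒴 → ℝ),
          margX P x * (Real.sqrt (P (x, p.2) / margX P x) *
            Real.sqrt (P (x, q.2) / margX P x)) : ℝ) : ℂ)
    else 0

open scoped Classical in
/-- The cq-state `ρ_{LA}`: block-diagonal over the distinct values `l` of `f_Y` on the
support of `P_Y`, with `l`-block `Σ_{y : f_Y(y)=l} P_Y(y)·|φ'_y⟩⟨φ'_y|`. -/
def rhoLA {𝒳 𝒴 : Type*} [Fintype 𝒳] [Fintype 𝒴] (P : 𝒳 × 𝒴 → ℝ) :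
    Matrix (↥(Finset.image (fY P) (Finset.univ.filter fun y => 0 < margY P y)) × 𝒳)
           (↥(Finset.image (fY P) (Finset.univ.filter fun y => 0 < margY P y)) × 𝒳) ℂ :=
  Matrix.of fun p q =>
    if p.1 = q.1 then
      ((∑ y ∈ Finset.univ.filter fun y => 0 < margY P y ∧ fY P y = (p.1 : 𝒳 → ℝ),
          margY P y * (Real.sqrt (P (p.2, y) / margY P y) *
            Real.sqrt (P (q.2, y) / margY P y)) : ℝ) : ℂ)
    else 0

/-! Non-triviality of `P` means that two values `x, x'` with different conditional distributions
`f_X` share a value `y` of `Y`, and then the same holds with `X` and `Y` exchanged. Grouping the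
values of `X` by `k = f_X(x)`, both `ρ_B` and `ρ_{KB}` are mixtures `∑ₖ q_k |ψ_k⟩⟨ψ_k|` with the
weights `q_k = P(f_X(X) = k)`. In `ρ_{KB}` the states lie in different blocks, so they are
orthogonal and `S(ρ_{KB}) = H(q)`; in `ρ_B` the states `√k` coming from `x` and `x'` overlap at `y`.
A mixture `A A*` has the same entropy as its Gram matrix `A* A`, whose diagonal is `q`, and entropy
is strictly Schur concave: `S(A* A) < H(q)` as soon as `A* A` is not diagonal. -/

open Polynomial Real

section Entropy

open scoped Classical

variable {m n : Type*} [Fintype m] [Fintype n]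

theorem shannon_eq_sum_negMulLog (p : m → ℝ) :
    shannon p = (∑ a, negMulLog (p a)) / log 2 := by
  simp only [shannon, Finset.sum_div, ← Finset.sum_neg_distrib, negMulLog, logb]
  exact Finset.sum_congr rfl fun _ _ => by ring

theorem Matrix.IsHermitian.vNE_eq {A : Matrix m m ℂ} (hA : A.IsHermitian) :
    vNE A = shannon hA.eigenvalues := by
  rw [vNE, dif_pos hA, shannon]

theorem Matrix.IsHermitian.vNE_eq_sum_roots {A : Matrix m m ℂ} (hA : A.IsHermitian) :
    vNE A = (A.charpoly.roots.map fun z => negMulLog z.re).sum / log 2 := by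
  rw [hA.vNE_eq, shannon_eq_sum_negMulLog, hA.roots_charpoly_eq_eigenvalues, Multiset.map_map]
  rfl

theorem vNE_eq_of_X_pow_mul_charpoly_eq {A : Matrix m m ℂ} {B : Matrix n n ℂ}
    (hA : A.IsHermitian) (hB : B.IsHermitian) {a b : ℕ}
    (h : X ^ a * A.charpoly = X ^ b * B.charpoly) : vNE A = vNE B := by
  have hroots := congrArg (fun p : ℂ[X] => (p.roots.map fun z => negMulLog z.re).sum) h
  simp only [roots_mul (mul_ne_zero (pow_ne_zero _ X_ne_zero) (charpoly_monic _).ne_zero),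
    roots_X_pow, Multiset.map_add, Multiset.sum_add, Multiset.map_nsmul, Multiset.sum_nsmul,
    Multiset.map_singleton, Multiset.sum_singleton, Complex.zero_re, negMulLog_zero,
    smul_zero, zero_add] at hroots
  rw [hA.vNE_eq_sum_roots, hB.vNE_eq_sum_roots, hroots]

theorem vNE_mul_conjTranspose_comm (A : Matrix m n ℂ) : vNE (A * Aᴴ) = vNE (Aᴴ * A) :=
  vNE_eq_of_X_pow_mul_charpoly_eq (isHermitian_mul_conjTranspose_self A)
    (isHermitian_conjTranspose_mul_self A) (charpoly_mul_comm' A Aᴴ)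

theorem vNE_diagonal_ofReal (q : m → ℝ) : vNE (diagonal fun i => (q i : ℂ)) = shannon q := by
  have hq : (diagonal fun i => (q i : ℂ)).IsHermitian := by
    simp [IsHermitian, diagonal_conjTranspose]
  have hroots : (diagonal fun i => (q i : ℂ)).charpoly.roots =
      Finset.univ.val.map fun i => (q i : ℂ) := by
    rw [charpoly_diagonal, Finset.prod_eq_multiset_prod, ← roots_multiset_prod_X_sub_C
      (Finset.univ.val.map fun i => (q i : ℂ)), Multiset.map_map]
    rfl
  rw [hq.vNE_eq_sum_roots, hroots, Multiset.map_map, shannon_eq_sum_negMulLog]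
  simp only [Function.comp_def, Complex.ofReal_re]
  rfl

end Entropy

section SchurConcavity

open scoped Classical ComplexOrder

variable {m ι κ : Type*} [Fintype m] [Fintype ι] [Fintype κ]

theorem Matrix.sum_normSq_apply_right_of_mem_unitaryGroup {U : Matrix m m ℂ}
    (hU : U ∈ unitaryGroup m ℂ) (i : m) : ∑ j, Complex.normSq (U i j) = 1 := by
  have h := congrFun (congrFun (mem_unitaryGroup_iff.mp hU) i) i
  simp only [mul_apply, star_apply, Complex.star_def, Complex.mul_conj, one_apply_eq] at h
  exact_mod_cast h

theorem Matrix.sum_normSq_apply_left_of_mem_unitaryGroup {U : Matrix m m ℂ}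
    (hU : U ∈ unitaryGroup m ℂ) (j : m) : ∑ i, Complex.normSq (U i j) = 1 := by
  have h := congrFun (congrFun (mem_unitaryGroup_iff'.mp hU) j) j
  simp only [mul_apply, star_apply, Complex.star_def, mul_comm (starRingEnd ℂ _),
    Complex.mul_conj, one_apply_eq] at h
  exact_mod_cast h

theorem Matrix.IsHermitian.apply_eq_sum_eigenvalues {A : Matrix m m ℂ} (hA : A.IsHermitian)
    (i k : m) : A i k = ∑ j, (hA.eigenvectorUnitary : Matrix m m ℂ) i j *
      hA.eigenvalues j * star ((hA.eigenvectorUnitary : Matrix m m ℂ) k j) := by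
  conv_lhs => rw [hA.spectral_theorem, Unitary.conjStarAlgAut_apply]
  simp only [mul_apply, diagonal_apply, star_apply, Function.comp_apply,
    RCLike.ofReal_eq_complex_ofReal, mul_ite, mul_zero, Finset.sum_ite_eq', Finset.mem_univ,
    if_true]

-- equality case of the Schur concavity of entropy under a doubly stochastic matrix `D`
theorem eq_of_sum_negMulLog_le {D : ι → κ → ℝ} (hD0 : ∀ i j, 0 ≤ D i j)
    (hrow : ∀ i, ∑ j, D i j = 1) (hcol : ∀ j, ∑ i, D i j = 1) {μ : κ → ℝ} (hμ : ∀ j, 0 ≤ μ j)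
    (h : ∑ i, negMulLog (∑ j, D i j * μ j) ≤ ∑ j, negMulLog (μ j)) :
    ∀ i j, D i j ≠ 0 → μ j = ∑ j', D i j' * μ j' := by
  have hjensen : ∀ i, ∑ j, D i j * negMulLog (μ j) ≤ negMulLog (∑ j, D i j * μ j) := fun i =>
    strictConcaveOn_negMulLog.concaveOn.le_map_sum (fun j _ => hD0 i j) (hrow i)
      (fun j _ => Set.mem_Ici.mpr (hμ j))
  have hsum : ∑ i, ∑ j, D i j * negMulLog (μ j) = ∑ j, negMulLog (μ j) := by
    rw [Finset.sum_comm]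
    simp only [← Finset.sum_mul, hcol, one_mul]
  have heq := (Finset.sum_eq_sum_iff_of_le fun i _ => hjensen i).mp
    (le_antisymm (Finset.sum_le_sum fun i _ => hjensen i) (hsum ▸ h))
  intro i j hij
  exact (strictConcaveOn_negMulLog.map_sum_eq_iff' (fun j _ => hD0 i j) (hrow i)
    (fun j _ => Set.mem_Ici.mpr (hμ j))).mp (heq i (Finset.mem_univ i)).symm j
    (Finset.mem_univ j) hij

theorem vNE_lt_shannon_of_apply_ne_zero {G : Matrix m m ℂ} (hG : G.PosSemidef) {q : m → ℝ}
    (hdiag : ∀ i, G i i = q i) {i k : m} (hik : i ≠ k) (hne : G i k ≠ 0) :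
    vNE G < shannon q := by
  obtain ⟨U, hU, hG_eq⟩ : ∃ U ∈ unitaryGroup m ℂ,
      ∀ i k, G i k = ∑ j, U i j * hG.1.eigenvalues j * star (U k j) :=
    ⟨_, hG.1.eigenvectorUnitary.2, hG.1.apply_eq_sum_eigenvalues⟩
  have hq : ∀ i, q i = ∑ j, Complex.normSq (U i j) * hG.1.eigenvalues j := fun i => by
    have h := (hdiag i).symm.trans (hG_eq i i)
    simp only [mul_right_comm (U i _), Complex.star_def, Complex.mul_conj] at h
    exact_mod_cast h
  rw [hG.1.vNE_eq, shannon_eq_sum_negMulLog, shannon_eq_sum_negMulLog]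
  refine div_lt_div_of_pos_right (lt_of_not_ge fun hle => hne ?_) (log_pos one_lt_two)
  simp only [hq] at hle
  have hconst := eq_of_sum_negMulLog_le (fun _ _ => Complex.normSq_nonneg _)
    (sum_normSq_apply_right_of_mem_unitaryGroup hU) (sum_normSq_apply_left_of_mem_unitaryGroup hU)
    hG.eigenvalues_nonneg hle
  -- the eigenvalues equal `q i` on the support of row `i` of `U`, so row `i` of `G` is `q i • U U*`
  calc G i k = ∑ j, (q i : ℂ) * (U i j * star (U k j)) := by
        rw [hG_eq]
        refine Finset.sum_congr rfl fun j _ => ?_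
        by_cases hUij : U i j = 0
        · simp [hUij]
        · rw [hq i, ← hconst i j (Complex.normSq_pos.mpr hUij).ne']
          ring
    _ = 0 := by
        have hUU := congrFun (congrFun (mem_unitaryGroup_iff.mp hU) i) k
        rw [mul_apply, one_apply_ne hik] at hUU
        simp only [star_apply] at hUU
        rw [← Finset.mul_sum, hUU, mul_zero]

end SchurConcavity

section Mixture

open scoped Classical ComplexOrder

variable {n ι : Type*}

/-- The density matrix `∑ i, q i • |ψ i⟩⟨ψ i|` of an ensemble of real vectors. -/
def mixture [Fintype ι] (q : ι → ℝ) (ψ : ι → n → ℝ) : Matrix n n ℂ :=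
  of fun a b => ((∑ i, q i * (ψ i a * ψ i b) : ℝ) : ℂ)

def mixtureFactor (q : ι → ℝ) (ψ : ι → n → ℝ) : Matrix n ι ℂ :=
  of fun a i => ((√(q i) * ψ i a : ℝ) : ℂ)

variable {q : ι → ℝ} {ψ : ι → n → ℝ}

theorem conjTranspose_mixtureFactor_mul_apply [Fintype n] (i j : ι) :
    ((mixtureFactor q ψ)ᴴ * mixtureFactor q ψ) i j =
      ((√(q i) * √(q j) * ∑ a, ψ i a * ψ j a : ℝ) : ℂ) := by
  simp only [mixtureFactor, mul_apply, of_apply, conjTranspose_apply, Complex.star_def,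
    Complex.conj_ofReal, ← Complex.ofReal_mul, ← Complex.ofReal_sum, Finset.mul_sum]
  exact congrArg _ (Finset.sum_congr rfl fun a _ => by ring)

variable [Fintype ι]

theorem mixture_eq_mul_conjTranspose (hq : ∀ i, 0 ≤ q i) :
    mixture q ψ = mixtureFactor q ψ * (mixtureFactor q ψ)ᴴ := by
  ext a b
  simp only [mixture, mixtureFactor, mul_apply, of_apply, conjTranspose_apply, Complex.star_def,
    Complex.conj_ofReal, ← Complex.ofReal_mul, ← Complex.ofReal_sum]
  congr 1
  refine Finset.sum_congr rfl fun i _ => ?_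
  linear_combination (-(ψ i a * ψ i b)) * mul_self_sqrt (hq i)

variable [Fintype n]

theorem vNE_mixture_of_orthonormal (hq : ∀ i, 0 ≤ q i) (hnorm : ∀ i, ∑ a, ψ i a * ψ i a = 1)
    (horth : ∀ i j, i ≠ j → ∑ a, ψ i a * ψ j a = 0) : vNE (mixture q ψ) = shannon q := by
  have hgram : (mixtureFactor q ψ)ᴴ * mixtureFactor q ψ = diagonal fun i => (q i : ℂ) := by
    ext i j
    rw [conjTranspose_mixtureFactor_mul_apply]
    obtain rfl | hij := eq_or_ne i j
    · rw [hnorm, diagonal_apply_eq, mul_one, mul_self_sqrt (hq i)]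
    · rw [horth i j hij, diagonal_apply_ne _ hij, mul_zero, Complex.ofReal_zero]
  rw [mixture_eq_mul_conjTranspose hq, vNE_mul_conjTranspose_comm, hgram, vNE_diagonal_ofReal]

theorem vNE_mixture_lt_of_inner_ne_zero (hq : ∀ i, 0 ≤ q i) (hnorm : ∀ i, ∑ a, ψ i a * ψ i a = 1)
    {i j : ι} (hij : i ≠ j) (hqi : 0 < q i) (hqj : 0 < q j) (hinner : ∑ a, ψ i a * ψ j a ≠ 0) :
    vNE (mixture q ψ) < shannon q := by
  rw [mixture_eq_mul_conjTranspose hq, vNE_mul_conjTranspose_comm]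
  refine vNE_lt_shannon_of_apply_ne_zero (posSemidef_conjTranspose_mul_self _) (fun l => ?_) hij ?_
  · rw [conjTranspose_mixtureFactor_mul_apply, hnorm, mul_one, mul_self_sqrt (hq l)]
  · rw [conjTranspose_mixtureFactor_mul_apply, Complex.ofReal_ne_zero]
    exact mul_ne_zero (mul_pos (sqrt_pos.2 hqi) (sqrt_pos.2 hqj)).ne' hinner

end Mixture

section Primitive

open scoped Classical

variable {𝒳 𝒴 : Type*} [Fintype 𝒴] {P : 𝒳 × 𝒴 → ℝ}

theorem margX_pos_of_pos (hP0 : ∀ xy, 0 ≤ P xy) {x : 𝒳} {y : 𝒴} (h : 0 < P (x, y)) :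
    0 < margX P x :=
  h.trans_le (Finset.single_le_sum (fun y _ => hP0 (x, y)) (Finset.mem_univ y))

theorem fX_nonneg (hP0 : ∀ xy, 0 ≤ P xy) (x : 𝒳) (y : 𝒴) : 0 ≤ fX P x y :=
  div_nonneg (hP0 _) (Finset.sum_nonneg fun y _ => hP0 (x, y))

theorem sum_fX_eq_one {x : 𝒳} (hx : margX P x ≠ 0) : ∑ y, fX P x y = 1 := by
  simp only [fX, ← Finset.sum_div]
  exact div_self hx

theorem fX_eq_of_proportional {x x' : 𝒳} {a b : ℝ} (ha : a ≠ 0) (hb : b ≠ 0)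
    (h : ∀ y, P (x, y) * a = P (x', y) * b) : fX P x = fX P x' := by
  have hm : margX P x * a = margX P x' * b := by simp only [margX, Finset.sum_mul, h]
  funext y
  rw [fX, fX, ← mul_div_mul_right _ _ ha, h y, hm, mul_div_mul_right _ _ hb]

def HasOverlap (P : 𝒳 × 𝒴 → ℝ) : Prop :=
  ∃ x x' y, 0 < P (x, y) ∧ 0 < P (x', y) ∧ fX P x ≠ fX P x'

variable [Fintype 𝒳]

theorem HasOverlap.swap (hP0 : ∀ xy, 0 ≤ P xy) (h : HasOverlap P) :
    HasOverlap (P ∘ Prod.swap) := by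
  by_contra hno
  -- then `f_Y` is constant along the support of each row, so rows meeting in a column are
  -- proportional
  have hconst : ∀ y₁ y₂ z, 0 < P (z, y₁) → 0 < P (z, y₂) → fY P y₁ = fY P y₂ :=
    fun y₁ y₂ z h₁ h₂ => by_contra fun hne => hno ⟨y₁, y₂, z, h₁, h₂, hne⟩
  obtain ⟨x, x', y, hx, hx', hne⟩ := h
  have hmy : 0 < margY P y := margX_pos_of_pos (P := P ∘ Prod.swap) (fun _ => hP0 _) hx
  refine hne (fX_eq_of_proportional (div_pos hx' hmy).ne' (div_pos hx hmy).ne' fun y₁ => ?_)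
  by_cases hy₁ : 0 < P (x, y₁) ∨ 0 < P (x', y₁)
  · have hfy : fY P y₁ = fY P y := hy₁.elim (fun h => hconst y₁ y x h hx)
      (fun h => hconst y₁ y x' h hx')
    have hmy₁ : 0 < margY P y₁ := hy₁.elim
      (margX_pos_of_pos (P := P ∘ Prod.swap) (fun _ => hP0 _))
      (margX_pos_of_pos (P := P ∘ Prod.swap) (fun _ => hP0 _))
    have hcol : ∀ z, P (z, y₁) = fY P y z * margY P y₁ := fun z => by
      rw [← hfy]
      exact (div_mul_cancel₀ _ hmy₁.ne').symm
    rw [hcol x, hcol x']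
    simp only [fY]
    ring
  · push Not at hy₁
    rw [le_antisymm hy₁.1 (hP0 _), le_antisymm hy₁.2 (hP0 _), zero_mul, zero_mul]

theorem Finset.sum_comp_sum_fiberwise_eq {ι κ : Type*} [Fintype ι] [DecidableEq κ]
    {t : Finset κ} {f : ι → κ} (hf : ∀ i, f i ∈ t) {w : ι → ℝ} {g : ℝ → ℝ} (hg : g 0 = 0)
    (hw : ∀ i i', w i ≠ 0 → w i' ≠ 0 → f i = f i') :
    ∑ k ∈ t, g (∑ i with f i = k, w i) = g (∑ i, w i) := by
  by_cases hw0 : ∀ i, w i = 0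
  · simp [hw0, hg]
  push Not at hw0
  obtain ⟨i₀, hi₀⟩ := hw0
  have hfiber : ∀ k, ∑ i with f i = k, w i = if k = f i₀ then ∑ i, w i else 0 := fun k => by
    split_ifs with hk
    · exact Finset.sum_filter_of_ne fun i _ hi => (hw i i₀ hi hi₀).trans hk.symm
    · exact Finset.sum_eq_zero fun i hi => by_contra fun hne =>
        hk ((Finset.mem_filter.mp hi).2.symm.trans (hw i i₀ hne hi₀))
  simp only [hfiber, apply_ite g, hg, Finset.sum_ite_eq', hf i₀, if_true]

theorem hasOverlap_of_condEntDep_ne_zero (hP0 : ∀ xy, 0 ≤ P xy) (h : condEntDep P ≠ 0) :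
    HasOverlap P := by
  by_contra hno
  refine h ?_
  -- each column of `P` lies in a single fibre of `f_X`, so `H(f_X(X), Y) = H(Y)`
  rw [condEntDep, entDepJoint, shannon, Finset.sum_comm, sub_eq_zero, neg_inj]
  refine Finset.sum_congr rfl fun y _ => ?_
  refine Finset.sum_comp_sum_fiberwise_eq (g := fun t => t * logb 2 t)
    (fun x => Finset.mem_image_of_mem _ (Finset.mem_univ x)) (by simp) fun x x' hx hx' => ?_
  exact by_contra fun hne => hno ⟨x, x', y, (hP0 _).lt_of_ne' hx, (hP0 _).lt_of_ne' hx', hne⟩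

-- the index set of the blocks of `ρ_{KB}`
abbrev condSupport (P : 𝒳 × 𝒴 → ℝ) : Finset (𝒴 → ℝ) :=
  (Finset.univ.filter fun x => 0 < margX P x).image (fX P)

-- the weight `P(f_X(X) = k)` of the block `k`
def condWeight (P : 𝒳 × 𝒴 → ℝ) (k : 𝒴 → ℝ) : ℝ :=
  ∑ x with 0 < margX P x ∧ fX P x = k, margX P x

theorem condWeight_nonneg (k : 𝒴 → ℝ) : 0 ≤ condWeight P k :=
  Finset.sum_nonneg fun _ hx => (Finset.mem_filter.mp hx).2.1.le

theorem margX_le_condWeight {x : 𝒳} (hx : 0 < margX P x) : margX P x ≤ condWeight P (fX P x) :=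
  Finset.single_le_sum (fun _ hz => (Finset.mem_filter.mp hz).2.1.le)
    (Finset.mem_filter.mpr ⟨Finset.mem_univ x, hx, rfl⟩)

theorem sum_sqrt_mul_sqrt_of_mem_condSupport (hP0 : ∀ xy, 0 ≤ P xy) {k : 𝒴 → ℝ}
    (hk : k ∈ condSupport P) : ∑ y, √(k y) * √(k y) = 1 := by
  obtain ⟨x, hx, rfl⟩ := Finset.mem_image.mp hk
  simp only [mul_self_sqrt (fX_nonneg hP0 x _)]
  exact sum_fX_eq_one (Finset.mem_filter.mp hx).2.ne'

theorem rhoKB_eq_mixture :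
    rhoKB P = mixture (fun k : condSupport P => condWeight P k)
      (fun k p => if p.1 = k then √((k : 𝒴 → ℝ) p.2) else 0) := by
  ext ⟨k, y⟩ ⟨k', y'⟩
  simp only [rhoKB, mixture, of_apply, ite_mul, mul_ite, zero_mul, mul_zero]
  split_ifs with hkk
  · subst hkk
    simp only [if_true, Finset.sum_ite_eq, Finset.mem_univ]
    congr 1
    rw [condWeight, Finset.sum_mul]
    refine Finset.sum_congr rfl fun x hx => ?_
    rw [← (Finset.mem_filter.mp hx).2.2]
    rfl
  · simp [hkk]

theorem rhoBcan_eq_mixture (hP0 : ∀ xy, 0 ≤ P xy) :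
    rhoBcan P = mixture (fun k : condSupport P => condWeight P k)
      (fun k y => √((k : 𝒴 → ℝ) y)) := by
  ext y y'
  simp only [rhoBcan, mixture, of_apply]
  congr 1
  have hm0 : ∀ x, 0 ≤ margX P x := fun x => Finset.sum_nonneg fun y _ => hP0 (x, y)
  calc ∑ x, margX P x * (√(fX P x y) * √(fX P x y'))
      = ∑ x with 0 < margX P x, margX P x * (√(fX P x y) * √(fX P x y')) :=
        (Finset.sum_filter_of_ne fun x _ hx => (hm0 x).lt_of_ne' (left_ne_zero_of_mul hx)).symm
    _ = ∑ k ∈ condSupport P, ∑ x with 0 < margX P x ∧ fX P x = k,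
          margX P x * (√(k y) * √(k y')) := by
        rw [← Finset.sum_fiberwise_of_maps_to fun x hx => Finset.mem_image_of_mem (fX P) hx]
        refine Finset.sum_congr rfl fun k _ => ?_
        rw [Finset.filter_filter]
        exact Finset.sum_congr rfl fun x hx => by rw [(Finset.mem_filter.mp hx).2.2]
    _ = ∑ k : condSupport P, condWeight P k * (√((k : 𝒴 → ℝ) y) * √((k : 𝒴 → ℝ) y')) := by
        rw [← Finset.sum_coe_sort (condSupport P)]
        simp only [condWeight, Finset.sum_mul]

theorem vNE_rhoKB (hP0 : ∀ xy, 0 ≤ P xy) :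
    vNE (rhoKB P) = shannon fun k : condSupport P => condWeight P k := by
  rw [rhoKB_eq_mixture]
  refine vNE_mixture_of_orthonormal (fun _ => condWeight_nonneg _) (fun k => ?_)
    fun k k' hkk' => ?_
  · simp only [Fintype.sum_prod_type, ite_mul, mul_ite, zero_mul, mul_zero]
    rw [Finset.sum_comm]
    simpa using sum_sqrt_mul_sqrt_of_mem_condSupport hP0 k.2
  · simp only [Fintype.sum_prod_type, ite_mul, mul_ite, zero_mul, mul_zero]
    rw [Finset.sum_comm]
    simp [hkk'.symm]

theorem vNE_rhoBcan_lt_vNE_rhoKB (hP0 : ∀ xy, 0 ≤ P xy) (h : HasOverlap P) :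
    vNE (rhoBcan P) < vNE (rhoKB P) := by
  obtain ⟨x, x', y, hx, hx', hne⟩ := h
  have hmx := margX_pos_of_pos hP0 hx
  have hmx' := margX_pos_of_pos hP0 hx'
  have hmem : ∀ {z}, 0 < margX P z → fX P z ∈ condSupport P := fun hz =>
    Finset.mem_image_of_mem _ (Finset.mem_filter.mpr ⟨Finset.mem_univ _, hz⟩)
  rw [vNE_rhoKB hP0, rhoBcan_eq_mixture hP0]
  refine vNE_mixture_lt_of_inner_ne_zero (i := ⟨fX P x, hmem hmx⟩) (j := ⟨fX P x', hmem hmx'⟩)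
    (fun _ => condWeight_nonneg _) (fun k => sum_sqrt_mul_sqrt_of_mem_condSupport hP0 k.2)
    (Subtype.coe_ne_coe.mp hne) (hmx.trans_le (margX_le_condWeight hmx))
    (hmx'.trans_le (margX_le_condWeight hmx')) (Finset.sum_pos' (fun _ _ => by positivity)
      ⟨y, Finset.mem_univ _, mul_pos (sqrt_pos.2 (div_pos hx hmx)) (sqrt_pos.2 (div_pos hx' hmx'))⟩).ne'

end Primitive

theorem canonical_embedding_nontrivial_general
    {𝒳 𝒴 : Type*} [Fintype 𝒳] [Fintype 𝒴]
    (P : 𝒳 × 𝒴 → ℝ) (hP0 : ∀ xy, 0 ≤ P xy)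
    (hnt : condEntDep P ≠ 0) :
    0 < vNE (rhoKB P) - vNE (rhoBcan P) ∧ 0 < vNE (rhoLA P) - vNE (rhoAcan P) := by
  have h := hasOverlap_of_condEntDep_ne_zero hP0 hnt
  have hA : vNE (rhoAcan P) < vNE (rhoLA P) :=
    vNE_rhoBcan_lt_vNE_rhoKB (P := P ∘ Prod.swap) (fun _ => hP0 _) (h.swap hP0)
  exact ⟨sub_pos.2 (vNE_rhoBcan_lt_vNE_rhoKB hP0 h), sub_pos.2 hA⟩

/-- If `P` is a non-trivial primitive, then its canonical embedding is
non-trivial: `S(X↘Y|B) = S(ρ_{KB}) − S(ρ_B) > 0` and `S(Y↘X|A) = S(ρ_{LA}) − S(ρ_A) > 0`. -/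
theorem canonical_embedding_nontrivial
    {𝒳 𝒴 : Type*} [Fintype 𝒳] [Fintype 𝒴] [Nonempty 𝒳] [Nonempty 𝒴]
    (P : 𝒳 × 𝒴 → ℝ) (hP0 : ∀ xy, 0 ≤ P xy) (hP1 : ∑ xy, P xy = 1)
    (hnt : condEntDep P ≠ 0) :
    0 < vNE (rhoKB P) - vNE (rhoBcan P) ∧ 0 < vNE (rhoLA P) - vNE (rhoAcan P) :=
  canonical_embedding_nontrivial_general P hP0 hnt
end
end

section
/- (Leakage of randomized Rabin string OT.) Let r ≥ 1. For every phase function θ, the regular embedding ψ_θ of the primitive P^{ROT_r} satisfies S(ρ_B(θ)) = −(1/2 + 2^{−r−1})·log₂(1/2 + 2^{−r−1}) + (2^r − 1)·(r+1)·2^{−r−1}, and I(X;Y) = r/2; hence the leakage Δ(ψ_θ) = −(1/2 + 2^{−r−1})·log₂(1/2 + 2^{−r−1}) + (2^r − 1)·(r+1)·2^{−r−1} − r/2 is the same for every θ. -/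
open scoped BigOperators
open Matrix

noncomputable section

/-- The randomized Rabin string OT primitive `P^{ROT_r}` on `𝒳 = {0,1}^r` and
`𝒴 = {0,1}^r ⊕ {⊥}`: `P(x,y) = 2^{-r-1}` if `y = x` or `y = ⊥`, and `0` otherwise. -/
def PROT (r : ℕ) : (Fin r → Bool) × ((Fin r → Bool) ⊕ Unit) → ℝ := fun p =>
  match p.2 with
  | Sum.inl y => if y = p.1 then 1 / 2 ^ (r + 1) else 0
  | Sum.inr _ => 1 / 2 ^ (r + 1)

/-!
Write `c = 2^{-r-1}` and `ω x = exp(i(θ(x, x) - θ(x, ⊥)))`, a unit complex number. In block form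
`ρ_B(θ) = [[c·I, c·ω], [c·ω*, 1/2]]`, and solving `ρ_B v = μ v` componentwise shows
`μ (μ - c) (μ - c - 1/2) = 0` for every θ. On the three points `0, c, c + 1/2` the function
`t ↦ t log₂ t` agrees with a quadratic without constant term, so the entropy only depends on
`tr ρ_B = 1` and `tr ρ_B² = 3c/2 + 1/4`, neither of which involves θ.
-/

namespace Matrix.IsHermitian

variable {𝕜 n : Type*} [RCLike 𝕜] [Fintype n] [DecidableEq n] {A : Matrix n n 𝕜}

lemma trace_mul_self_eq_sum_eigenvalues_sq (hA : A.IsHermitian) :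
    (A * A).trace = ∑ i, (hA.eigenvalues i : 𝕜) ^ 2 := by
  conv_lhs => rw [hA.spectral_theorem, ← map_mul, Unitary.conjStarAlgAut_apply, trace_mul_cycle,
    Unitary.coe_star_mul_self, one_mul, diagonal_mul_diagonal, trace_diagonal]
  simp [sq]

end Matrix.IsHermitian

theorem Finset.sum_comp_eq_of_forall_eq_zero_or_eq_or_eq {ι : Type*} (s : Finset ι) {f : ℝ → ℝ}
    (hf : f 0 = 0) {a b : ℝ} (ha : a ≠ 0) (hb : b ≠ 0) (hab : a ≠ b) {μ : ι → ℝ}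
    (hμ : ∀ i ∈ s, μ i = 0 ∨ μ i = a ∨ μ i = b) :
    ∑ i ∈ s, f (μ i) = f a / a * ∑ i ∈ s, μ i +
      (f b / b - f a / a) / (b - a) * (∑ i ∈ s, μ i ^ 2 - a * ∑ i ∈ s, μ i) := by
  have hba : b - a ≠ 0 := sub_ne_zero.mpr hab.symm
  calc ∑ i ∈ s, f (μ i)
      = ∑ i ∈ s, (f a / a * μ i + (f b / b - f a / a) / (b - a) * (μ i ^ 2 - a * μ i)) := by
        refine Finset.sum_congr rfl fun i hi => ?_
        rcases hμ i hi with h | h | h <;> rw [h]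
        · simp [hf]
        · field_simp; ring
        · field_simp; ring
    _ = _ := by
        simp only [Finset.sum_add_distrib, ← Finset.mul_sum, Finset.sum_sub_distrib]

theorem vNE_eq_of_eigenvalues_mem {n : Type*} [Fintype n] {ρ : Matrix n n ℂ} (hρ : ρ.IsHermitian)
    {a b : ℝ} (ha : a ≠ 0) (hb : b ≠ 0) (hab : a ≠ b)
    (hspec : ∀ (μ : ℝ) (v : n → ℂ), v ≠ 0 → ρ *ᵥ v = μ • v → μ = 0 ∨ μ = a ∨ μ = b) :
    vNE ρ = -(Real.logb 2 a * ρ.trace.re + (Real.logb 2 b - Real.logb 2 a) / (b - a) *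
      ((ρ * ρ).trace.re - a * ρ.trace.re)) := by
  classical
  rw [vNE, dif_pos hρ, hρ.trace_eq_sum_eigenvalues, hρ.trace_mul_self_eq_sum_eigenvalues_sq,
    Finset.sum_comp_eq_of_forall_eq_zero_or_eq_or_eq _ (f := fun t => t * Real.logb 2 t) (by simp)
      ha hb hab fun i _ => hspec _ _ ((WithLp.ofLp_eq_zero 2).ne.2 <|
        hρ.eigenvectorBasis.orthonormal.ne_zero i) (hρ.mulVec_eigenvectorBasis i)]
  simp only [mul_div_cancel_left₀ _ ha, mul_div_cancel_left₀ _ hb]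
  simp [← Complex.ofReal_pow, ← Complex.ofReal_sum]

lemma rhoB_isHermitian {X Y : Type*} [Fintype X] (P θ : X × Y → ℝ) : (rhoB P θ).IsHermitian := by
  ext y y'
  simp only [conjTranspose_apply, rhoB, of_apply, star_sum, star_mul', star_star, mul_comm]

lemma regEmb_mul_star {X Y : Type*} (P θ : X × Y → ℝ) (p q : X × Y) :
    regEmb P θ p * star (regEmb P θ q) =
      ↑(√(P p) * √(P q)) * Complex.exp (↑(θ p - θ q) * Complex.I) := by
  simp only [regEmb, star_mul', Complex.star_def, ← Complex.exp_conj, map_mul, Complex.conj_I,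
    Complex.conj_ofReal]
  rw [mul_comm _ (Complex.exp _), mul_mul_mul_comm, ← Complex.exp_add]
  push_cast
  ring_nf

namespace PROT

open Complex

variable (r : ℕ) (θ : (Fin r → Bool) × ((Fin r → Bool) ⊕ Unit) → ℝ)

def phase (x : Fin r → Bool) : ℂ := exp (↑(θ (x, .inl x) - θ (x, .inr ())) * I)

lemma star_phase_mul_phase (x : Fin r → Bool) : star (phase r θ x) * phase r θ x = 1 := by
  rw [star_def, conj_mul', phase, norm_exp_ofReal_mul_I, ofReal_one, one_pow]

lemma apply_inl (x b : Fin r → Bool) :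
    PROT r (x, .inl b) = if b = x then 1 / 2 ^ (r + 1) else 0 := rfl

lemma apply_inr (x : Fin r → Bool) (u : Unit) : PROT r (x, .inr u) = 1 / 2 ^ (r + 1) := rfl

lemma sqrt_apply_inl (x b : Fin r → Bool) :
    √(PROT r (x, .inl b)) = if b = x then √(1 / 2 ^ (r + 1)) else 0 := by
  rw [apply_inl]; split_ifs <;> simp

lemma sqrt_apply_inr (x : Fin r → Bool) (u : Unit) :
    √(PROT r (x, .inr u)) = √(1 / 2 ^ (r + 1)) := rfl

lemma sqrt_mul_sqrt_weight : √(1 / 2 ^ (r + 1) : ℝ) * √(1 / 2 ^ (r + 1)) = 1 / 2 ^ (r + 1) :=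
  Real.mul_self_sqrt (by positivity)

lemma rhoB_inl_inl (a b : Fin r → Bool) :
    rhoB (PROT r) θ (.inl a) (.inl b) = if a = b then ((1 / 2 ^ (r + 1) : ℝ) : ℂ) else 0 := by
  rw [rhoB, of_apply, Finset.sum_eq_single a]
  · rw [regEmb_mul_star, sqrt_apply_inl, sqrt_apply_inl, if_pos rfl]
    by_cases h : a = b
    · subst h; rw [if_pos rfl, if_pos rfl, sqrt_mul_sqrt_weight, sub_self]; simp
    · rw [if_neg (Ne.symm h), if_neg h]; simp
  · intro x _ hx; rw [regEmb_mul_star, sqrt_apply_inl, if_neg (Ne.symm hx)]; simp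
  · simp

lemma rhoB_inl_inr (a : Fin r → Bool) (u : Unit) :
    rhoB (PROT r) θ (.inl a) (.inr u) = ((1 / 2 ^ (r + 1) : ℝ) : ℂ) * phase r θ a := by
  rw [rhoB, of_apply, Finset.sum_eq_single a]
  · rw [regEmb_mul_star, sqrt_apply_inl, if_pos rfl, sqrt_apply_inr, sqrt_mul_sqrt_weight, phase]
  · intro x _ hx; rw [regEmb_mul_star, sqrt_apply_inl, if_neg (Ne.symm hx)]; simp
  · simp

lemma rhoB_inr_inl (b : Fin r → Bool) (u : Unit) :
    rhoB (PROT r) θ (.inr u) (.inl b) = ((1 / 2 ^ (r + 1) : ℝ) : ℂ) * star (phase r θ b) := by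
  rw [← (rhoB_isHermitian (PROT r) θ).apply, rhoB_inl_inr, star_mul', star_def, conj_ofReal]

lemma rhoB_inr_inr (u u' : Unit) : rhoB (PROT r) θ (.inr u) (.inr u') = 1 / 2 := by
  simp only [rhoB, of_apply, regEmb_mul_star, sqrt_apply_inr, sqrt_mul_sqrt_weight, sub_self]
  simp [pow_succ, mul_left_comm _ (2⁻¹ : ℂ)]

lemma rhoB_mulVec_inl (v : (Fin r → Bool) ⊕ Unit → ℂ) (a : Fin r → Bool) :
    (rhoB (PROT r) θ *ᵥ v) (.inl a) =
      ((1 / 2 ^ (r + 1) : ℝ) : ℂ) * (v (.inl a) + phase r θ a * v (.inr ())) := by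
  simp [mulVec, dotProduct, Fintype.sum_sum_type, rhoB_inl_inl, rhoB_inl_inr, mul_add, mul_assoc]

lemma rhoB_mulVec_inr (v : (Fin r → Bool) ⊕ Unit → ℂ) (u : Unit) :
    (rhoB (PROT r) θ *ᵥ v) (.inr u) =
      ((1 / 2 ^ (r + 1) : ℝ) : ℂ) * ∑ b, star (phase r θ b) * v (.inl b) +
        1 / 2 * v (.inr ()) := by
  simp [mulVec, dotProduct, Fintype.sum_sum_type, rhoB_inr_inl, rhoB_inr_inr, Finset.mul_sum,
    mul_assoc]

lemma card_mul_weight : ((2 ^ r : ℕ) : ℂ) * ((1 / 2 ^ (r + 1) : ℝ) : ℂ) = 1 / 2 := by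
  push_cast; field_simp; ring

lemma eq_zero_or_eq_or_eq_of_rhoB_mulVec_eq_smul {μ : ℝ} {v : (Fin r → Bool) ⊕ Unit → ℂ}
    (hv : v ≠ 0) (h : rhoB (PROT r) θ *ᵥ v = μ • v) :
    μ = 0 ∨ μ = 1 / 2 ^ (r + 1) ∨ μ = 1 / 2 ^ (r + 1) + 1 / 2 := by
  set c : ℝ := 1 / 2 ^ (r + 1)
  set w := v (.inr ())
  set s := ∑ b, star (phase r θ b) * v (.inl b)
  have hinl (a) : (μ : ℂ) * v (.inl a) = c * (v (.inl a) + phase r θ a * w) := by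
    rw [← rhoB_mulVec_inl, h, Pi.smul_apply, Complex.real_smul]
  have hinr : (μ : ℂ) * w = c * s + 1 / 2 * w := by
    rw [← rhoB_mulVec_inr r θ v (), h, Pi.smul_apply, Complex.real_smul]
  have hs : (μ : ℂ) * s = c * s + 1 / 2 * w := by
    have hterm (b) : star (phase r θ b) * ((μ : ℂ) * v (.inl b)) =
        c * (star (phase r θ b) * v (.inl b)) + c * w := by
      rw [hinl]; linear_combination (c * w) * star_phase_mul_phase r θ b
    calc (μ : ℂ) * s = ∑ b, star (phase r θ b) * ((μ : ℂ) * v (.inl b)) := by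
          rw [Finset.mul_sum]; exact Finset.sum_congr rfl fun b _ => by ring
      _ = c * s + ((2 ^ r : ℕ) : ℂ) * c * w := by
          rw [Finset.sum_congr rfl fun b _ => hterm b, Finset.sum_add_distrib, ← Finset.mul_sum]
          simp only [Finset.sum_const, Finset.card_univ, Fintype.card_fun, Fintype.card_bool,
            Fintype.card_fin, nsmul_eq_mul]
          ring
      _ = c * s + 1 / 2 * w := by rw [card_mul_weight]
  have hp : ((μ * (μ - c) * (μ - (c + 1 / 2)) : ℝ) : ℂ) • v = 0 := by
    funext y
    rcases y with a | u
    · simp only [Pi.smul_apply, smul_eq_mul, Pi.zero_apply]; push_cast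
      linear_combination (μ * (μ - c - 1 / 2) : ℂ) * hinl a
        + (c * phase r θ a) * ((μ : ℂ) * hinr + c * (hs - hinr))
    · simp only [Pi.smul_apply, smul_eq_mul, Pi.zero_apply]; push_cast
      linear_combination (μ - c : ℂ) * ((μ : ℂ) * hinr + c * (hs - hinr))
  rcases smul_eq_zero.mp hp with hp | hp
  · rw [Complex.ofReal_eq_zero] at hp
    rcases mul_eq_zero.mp hp with hp | hp
    · rcases mul_eq_zero.mp hp with hp | hp
      · exact .inl hp
      · exact .inr (.inl (sub_eq_zero.mp hp))
    · exact .inr (.inr (sub_eq_zero.mp hp))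
  · exact absurd hp hv

lemma trace_rhoB : (rhoB (PROT r) θ).trace = 1 := by
  simp only [trace, diag_apply, Fintype.sum_sum_type, rhoB_inl_inl, rhoB_inr_inr, if_true,
    Finset.sum_const, Finset.card_univ, Fintype.card_fun, Fintype.card_bool, Fintype.card_fin,
    nsmul_eq_mul, Finset.univ_unique]
  rw [card_mul_weight]
  norm_num

lemma trace_rhoB_mul_self :
    (rhoB (PROT r) θ * rhoB (PROT r) θ).trace = ((3 / 2 * (1 / 2 ^ (r + 1)) + 1 / 4 : ℝ) : ℂ) := by
  simp only [trace, diag_apply, mul_apply, Fintype.sum_sum_type, rhoB_inl_inl, rhoB_inl_inr,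
    rhoB_inr_inl, rhoB_inr_inr]
  have hph (x) : phase r θ x * star (phase r θ x) = 1 := by rw [mul_comm, star_phase_mul_phase]
  simp only [mul_mul_mul_comm _ (phase r θ _), mul_mul_mul_comm _ (star (phase r θ _)), hph,
    star_phase_mul_phase, mul_one, ite_mul, zero_mul, Finset.sum_ite_eq, Finset.mem_univ, if_true,
    Finset.sum_const, Finset.card_univ, Fintype.card_unit, Fintype.card_fun, Fintype.card_bool,
    Fintype.card_fin, nsmul_eq_mul, one_smul]
  push_cast
  field_simp
  ring

lemma logb_weight : Real.logb 2 (1 / 2 ^ (r + 1)) = -(r + 1) := by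
  rw [one_div, Real.logb_inv, Real.logb_pow, Real.logb_self_eq_one one_lt_two]
  push_cast; ring

lemma vNE_rhoB : vNE (rhoB (PROT r) θ) =
    -(1 / 2 + 1 / 2 ^ (r + 1)) * Real.logb 2 (1 / 2 + 1 / 2 ^ (r + 1)) +
      ((2 : ℝ) ^ r - 1) * ((r : ℝ) + 1) / 2 ^ (r + 1) := by
  have hc : (1 / 2 ^ (r + 1) : ℝ) ≠ 0 := by positivity
  rw [vNE_eq_of_eigenvalues_mem (rhoB_isHermitian _ _) hc (by positivity) (by simp)
    fun _ _ => eq_zero_or_eq_or_eq_of_rhoB_mulVec_eq_smul r θ, trace_rhoB, trace_rhoB_mul_self,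
    logb_weight, Complex.one_re, Complex.ofReal_re, add_comm (1 / 2 : ℝ)]
  field_simp
  ring

lemma margX_eq (x : Fin r → Bool) : margX (PROT r) x = 1 / 2 ^ r := by
  rw [margX, Fintype.sum_sum_type, Fintype.sum_unique (ι := Unit)]
  simp only [apply_inl, apply_inr, Finset.sum_ite_eq', Finset.mem_univ, if_true]
  rw [pow_succ]; field_simp; ring

lemma margY_inl (b : Fin r → Bool) : margY (PROT r) (.inl b) = 1 / 2 ^ (r + 1) := by
  simp only [margY, apply_inl, Finset.sum_ite_eq, Finset.mem_univ, if_true]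

lemma margY_inr (u : Unit) : margY (PROT r) (.inr u) = 1 / 2 := by
  rw [margY, Finset.sum_congr rfl fun x _ => apply_inr r x u, Finset.sum_const, Finset.card_univ,
    Fintype.card_fun, Fintype.card_bool, Fintype.card_fin, nsmul_eq_mul]
  push_cast; field_simp; ring

lemma mutualInfo_eq : mutualInfo (PROT r) = r / 2 := by
  have hrow (x : Fin r → Bool) : ∑ y, PROT r (x, y) *
      Real.logb 2 (PROT r (x, y) / (margX (PROT r) x * margY (PROT r) y)) = r / 2 ^ (r + 1) := by
    have hdiag : PROT r (x, .inl x) / (margX (PROT r) x * margY (PROT r) (.inl x)) = 2 ^ r := by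
      rw [apply_inl, if_pos rfl, margX_eq, margY_inl]; field_simp
    have herase (u : Unit) :
        PROT r (x, .inr u) / (margX (PROT r) x * margY (PROT r) (.inr u)) = 1 := by
      rw [apply_inr, margX_eq, margY_inr, pow_succ]; field_simp
    rw [Fintype.sum_sum_type, Fintype.sum_unique (ι := Unit), herase, Real.logb_one, mul_zero,
      add_zero,
      Finset.sum_eq_single x (fun b _ hb => by rw [apply_inl, if_neg hb, zero_mul]) (by simp),
      hdiag, Real.logb_pow, Real.logb_self_eq_one one_lt_two, apply_inl, if_pos rfl]
    ring
  rw [mutualInfo, Finset.sum_congr rfl fun x _ => hrow x, Finset.sum_const, Finset.card_univ,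
    Fintype.card_fun, Fintype.card_bool, Fintype.card_fin, nsmul_eq_mul]
  push_cast; field_simp; ring

end PROT

theorem leakage_PROT_general (r : ℕ) (θ : (Fin r → Bool) × ((Fin r → Bool) ⊕ Unit) → ℝ) :
    vNE (rhoB (PROT r) θ) =
      -(1 / 2 + 1 / 2 ^ (r + 1)) * Real.logb 2 (1 / 2 + 1 / 2 ^ (r + 1)) +
        ((2 : ℝ) ^ r - 1) * ((r : ℝ) + 1) / 2 ^ (r + 1) ∧
    mutualInfo (PROT r) = (r : ℝ) / 2 ∧
    leakReg (PROT r) θ =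
      -(1 / 2 + 1 / 2 ^ (r + 1)) * Real.logb 2 (1 / 2 + 1 / 2 ^ (r + 1)) +
        ((2 : ℝ) ^ r - 1) * ((r : ℝ) + 1) / 2 ^ (r + 1) - (r : ℝ) / 2 :=
  ⟨PROT.vNE_rhoB r θ, PROT.mutualInfo_eq r, by rw [leakReg, PROT.vNE_rhoB, PROT.mutualInfo_eq]⟩

/-- **Leakage of randomized Rabin string OT.** For every phase function `θ`,
the regular embedding `ψ_θ` of `P^{ROT_r}` satisfies
`S(ρ_B(θ)) = −(1/2 + 2^{−r−1})·log₂(1/2 + 2^{−r−1}) + (2^r − 1)·(r+1)·2^{−r−1}` and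
`I(X;Y) = r/2`; hence the leakage `Δ(ψ_θ)` is the same for every `θ`. -/
theorem leakage_PROT (r : ℕ) (hr : 1 ≤ r) (θ : (Fin r → Bool) × ((Fin r → Bool) ⊕ Unit) → ℝ) :
    vNE (rhoB (PROT r) θ) =
      -(1 / 2 + 1 / 2 ^ (r + 1)) * Real.logb 2 (1 / 2 + 1 / 2 ^ (r + 1)) +
        ((2 : ℝ) ^ r - 1) * ((r : ℝ) + 1) / 2 ^ (r + 1) ∧
    mutualInfo (PROT r) = (r : ℝ) / 2 ∧
    leakReg (PROT r) θ =
      -(1 / 2 + 1 / 2 ^ (r + 1)) * Real.logb 2 (1 / 2 + 1 / 2 ^ (r + 1)) +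
        ((2 : ℝ) ^ r - 1) * ((r : ℝ) + 1) / 2 ^ (r + 1) - (r : ℝ) / 2 :=
  leakage_PROT_general r θ
end
end

section
/- (Leakage of randomized Rabin OT of one bit.) For every phase function θ, the regular embedding ψ_θ of the primitive P^{ROT_1} has leakage Δ(ψ_θ) = h(1/4) − 1/2, where h is the binary entropy function h(t) = −t·log₂ t − (1−t)·log₂(1−t). -/
open scoped BigOperators
open Matrix

noncomputable section

/-- The binary entropy function `h(t) = −t·log₂ t − (1−t)·log₂(1−t)`. -/
def binEnt (t : ℝ) : ℝ := -t * Real.logb 2 t - (1 - t) * Real.logb 2 (1 - t)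

/-- The randomized Rabin OT primitive `P^{ROT_1}` on `𝒳 = {0,1}` and `𝒴 = {0,1} ⊕ {⊥}`:
`P(x,y) = 1/4` if `y = x` or `y = ⊥`, and `0` otherwise. -/
def PROT1 : Bool × (Bool ⊕ Unit) → ℝ := fun p =>
  match p.2 with
  | Sum.inl y => if y = p.1 then 1 / 4 else 0
  | Sum.inr _ => 1 / 4

/-!
Write `ρ_B = W Wᴴ`, where column `x` of `W` is the vector `ψ_θ(x, ·)`. The `2 × 2` Gram matrix
`Wᴴ W` has diagonal `P_X(x) = 1/2`, and its off-diagonal entries have modulus `1/4` because the two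
columns overlap only at `y = ⊥`; so `Wᴴ W` is annihilated by `(X - 1/4)(X - 3/4)`, and
`ρ_B = W Wᴴ` by `X (X - 1/4)(X - 3/4)`, whatever `θ` is. The three eigenvalues of `ρ_B` thus lie
in `{0, 1/4, 3/4}` and sum to `tr ρ_B = 1`, which forces them to be `0, 1/4, 3/4`. Hence
`S(ρ_B) = h(1/4)`, while `I(X;Y) = 1/2`.
-/

open Polynomial

theorem Matrix.mul_mul_pow_mul {m n R : Type*} [Fintype m] [Fintype n] [DecidableEq m]
    [DecidableEq n] [CommSemiring R] (A : Matrix m n R) (B : Matrix n m R) (k : ℕ) :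
    A * (B * A) ^ k * B = (A * B) ^ (k + 1) := by
  induction k with
  | zero => simp
  | succ k ih => rw [pow_succ', pow_succ', ← ih]; simp only [Matrix.mul_assoc]

theorem Matrix.aeval_mul_X_mul {m n R 𝕜 : Type*} [Fintype m] [Fintype n] [DecidableEq m]
    [DecidableEq n] [CommSemiring R] [CommSemiring 𝕜] [Algebra R 𝕜]
    (A : Matrix m n 𝕜) (B : Matrix n m 𝕜) (p : R[X]) :
    aeval (A * B) (X * p) = A * aeval (B * A) p * B := by
  induction p using Polynomial.induction_on' with
  | add p q hp hq => rw [mul_add, map_add, hp, hq, map_add, Matrix.mul_add, Matrix.add_mul]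
  | monomial k c =>
    rw [← C_mul_X_pow_eq_monomial, mul_left_comm, ← pow_succ']
    simp only [map_mul, aeval_C, aeval_X_pow, ← Matrix.mul_mul_pow_mul,
      Algebra.algebraMap_eq_smul_one]
    simp [Matrix.mul_smul, Matrix.smul_mul]

theorem Matrix.aeval_X_sub_C_mul_X_sub_C_eq_zero_of_bool {𝕜 : Type*} [RCLike 𝕜]
    (G : Matrix Bool Bool 𝕜) (a b : ℝ) (hdiag : ∀ i, G i i = ((a + b) / 2 : ℝ))
    (hoff : G false true * G true false = (((b - a) / 2) ^ 2 : ℝ)) :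
    aeval G ((X - C a) * (X - C b)) = 0 := by
  have h₀ := hdiag false
  have h₁ := hdiag true
  push_cast at h₀ h₁ hoff
  ext i j
  cases i <;> cases j <;>
    simp [Matrix.mul_apply, Matrix.algebraMap_matrix_apply, Matrix.sub_apply]
  · linear_combination hoff + (G false false - (a + b) / 2) * h₀
  · linear_combination G false true * (h₀ + h₁)
  · linear_combination G true false * (h₀ + h₁)
  · linear_combination hoff + (G true true - (a + b) / 2) * h₁

theorem Matrix.IsHermitian.isRoot_eigenvalues_of_aeval_eq_zero {𝕜 n : Type*} [RCLike 𝕜]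
    [Fintype n] [DecidableEq n] {A : Matrix n n 𝕜} (hA : A.IsHermitian) {p : ℝ[X]}
    (hp : aeval A p = 0) (i : n) : p.IsRoot (hA.eigenvalues i) := by
  have : Nonempty n := ⟨i⟩
  have h := spectrum.subset_polynomial_aeval A p ⟨_, hA.eigenvalues_mem_spectrum_real i, rfl⟩
  rwa [hp, spectrum.zero_eq, Set.mem_singleton_iff] at h

theorem neg_sum_mul_logb_eq_binEnt {ι : Type*} [Fintype ι] (hι : Fintype.card ι = 3)
    (μ : ι → ℝ) (hμ : ∀ i, μ i = 0 ∨ μ i = 1 / 4 ∨ μ i = 3 / 4) (hsum : ∑ i, μ i = 1) :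
    -∑ i, μ i * Real.logb 2 (μ i) = binEnt (1 / 4) := by
  let e := (Fintype.equivFinOfCardEq hι).symm
  rw [← e.sum_comp] at hsum ⊢
  rw [Fin.sum_univ_three] at hsum ⊢
  rcases hμ (e 0) with h₀ | h₀ | h₀ <;> rcases hμ (e 1) with h₁ | h₁ | h₁ <;>
    rcases hμ (e 2) with h₂ | h₂ | h₂ <;> rw [h₀, h₁, h₂] at hsum ⊢ <;> norm_num at hsum <;>
    · rw [binEnt]; ring_nf

section RegularEmbedding

variable {X Y : Type*} (P θ : X × Y → ℝ)

def ampMatrix : Matrix Y X ℂ := Matrix.of fun y x => regEmb P θ (x, y)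

theorem rhoB_eq_ampMatrix_mul_conjTranspose [Fintype X] :
    rhoB P θ = ampMatrix P θ * (ampMatrix P θ)ᴴ := by
  ext y y'
  simp [rhoB, ampMatrix, Matrix.mul_apply]

variable {P}

theorem regEmb_eq_zero {xy : X × Y} (h : P xy = 0) : regEmb P θ xy = 0 := by
  simp [regEmb, h]

theorem star_regEmb_mul_self {xy : X × Y} (h : 0 ≤ P xy) :
    star (regEmb P θ xy) * regEmb P θ xy = P xy := by
  rw [mul_comm, Complex.star_def, Complex.mul_conj, regEmb, Complex.normSq_mul,
    Complex.normSq_ofReal, Real.mul_self_sqrt h, mul_comm Complex.I, Complex.normSq_eq_norm_sq,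
    Complex.norm_exp_ofReal_mul_I]
  simp

theorem conjTranspose_ampMatrix_mul_self_apply_self [Fintype Y] (hP : ∀ xy, 0 ≤ P xy) (x : X) :
    ((ampMatrix P θ)ᴴ * ampMatrix P θ) x x = margX P x := by
  simp only [Matrix.mul_apply, conjTranspose_apply, ampMatrix, of_apply,
    star_regEmb_mul_self θ (hP _), margX]
  push_cast
  rfl

end RegularEmbedding

theorem PROT1_nonneg (xy : Bool × (Bool ⊕ Unit)) : 0 ≤ PROT1 xy := by
  rcases xy with ⟨x, (y | _)⟩ <;> simp only [PROT1] <;> positivity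

theorem margX_PROT1 (x : Bool) : margX PROT1 x = 1 / 2 := by
  cases x <;> norm_num [margX, PROT1, Fintype.sum_sum_type]

theorem mutualInfo_PROT1 : mutualInfo PROT1 = 1 / 2 := by
  norm_num [mutualInfo, margX_PROT1, margY, PROT1, Fintype.sum_sum_type, Real.logb_self_eq_one]

theorem ampMatrix_PROT1_gram_offDiag_mul (θ : Bool × (Bool ⊕ Unit) → ℝ) :
    ((ampMatrix PROT1 θ)ᴴ * ampMatrix PROT1 θ) false true *
      ((ampMatrix PROT1 θ)ᴴ * ampMatrix PROT1 θ) true false = 1 / 16 := by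
  set a₀ := regEmb PROT1 θ (false, .inr ())
  set a₁ := regEmb PROT1 θ (true, .inr ())
  have h₀ : star a₀ * a₀ = 1 / 4 := by
    simpa [PROT1] using star_regEmb_mul_self θ (PROT1_nonneg (false, .inr ()))
  have h₁ : star a₁ * a₁ = 1 / 4 := by
    simpa [PROT1] using star_regEmb_mul_self θ (PROT1_nonneg (true, .inr ()))
  simp only [Matrix.mul_apply, conjTranspose_apply, ampMatrix, of_apply, Fintype.sum_sum_type,
    Fintype.sum_bool, Fintype.sum_unique, PUnit.default_eq_unit,
    regEmb_eq_zero θ (show PROT1 (false, .inl true) = 0 by simp [PROT1]),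
    regEmb_eq_zero θ (show PROT1 (true, .inl false) = 0 by simp [PROT1]),
    star_zero, zero_mul, mul_zero, zero_add]
  calc star a₀ * a₁ * (star a₁ * a₀) = (star a₀ * a₀) * (star a₁ * a₁) := by ring
    _ = 1 / 16 := by rw [h₀, h₁]; norm_num

theorem vNE_eq_neg_sum_eigenvalues {n : Type*} [Fintype n] [DecidableEq n] {ρ : Matrix n n ℂ}
    (hρ : ρ.IsHermitian) :
    vNE ρ = -∑ i, hρ.eigenvalues i * Real.logb 2 (hρ.eigenvalues i) := by
  rw [vNE, dif_pos hρ]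
  congr!

theorem vNE_eq_binEnt_quarter {ι : Type*} [Fintype ι] [DecidableEq ι] (hι : Fintype.card ι = 3)
    {ρ : Matrix ι ι ℂ} (hρ : ρ.IsHermitian) (htr : ρ.trace = 1)
    (hroots : aeval ρ (X * ((X - C (1 / 4)) * (X - C (3 / 4))) : ℝ[X]) = 0) :
    vNE ρ = binEnt (1 / 4) := by
  rw [vNE_eq_neg_sum_eigenvalues hρ]
  refine neg_sum_mul_logb_eq_binEnt hι _ (fun i => ?_) ?_
  · simpa [sub_eq_zero, or_assoc] using hρ.isRoot_eigenvalues_of_aeval_eq_zero hroots i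
  · have h := hρ.trace_eq_sum_eigenvalues
    rw [htr] at h
    simpa using congrArg RCLike.re h.symm

/-- **Leakage of randomized Rabin OT of one bit.** For every phase function
`θ`, the regular embedding `ψ_θ` of `P^{ROT_1}` has leakage `Δ(ψ_θ) = h(1/4) − 1/2`. -/
theorem leakage_PROT1 (θ : Bool × (Bool ⊕ Unit) → ℝ) :
    leakReg PROT1 θ = binEnt (1 / 4) - 1 / 2 := by
  set W := ampMatrix PROT1 θ
  have hdiag : ∀ x, (Wᴴ * W) x x = ((1 / 4 + 3 / 4) / 2 : ℝ) := fun x => by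
    rw [conjTranspose_ampMatrix_mul_self_apply_self θ PROT1_nonneg, margX_PROT1]
    norm_num
  have hgram : aeval (Wᴴ * W) ((X - C (1 / 4)) * (X - C (3 / 4)) : ℝ[X]) = 0 :=
    (Wᴴ * W).aeval_X_sub_C_mul_X_sub_C_eq_zero_of_bool _ _ hdiag
      (by rw [ampMatrix_PROT1_gram_offDiag_mul]; norm_num)
  have hroots : aeval (rhoB PROT1 θ) (X * ((X - C (1 / 4)) * (X - C (3 / 4))) : ℝ[X]) = 0 := by
    rw [rhoB_eq_ampMatrix_mul_conjTranspose, Matrix.aeval_mul_X_mul, hgram, Matrix.mul_zero,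
      Matrix.zero_mul]
  have htr : (rhoB PROT1 θ).trace = 1 := by
    rw [rhoB_eq_ampMatrix_mul_conjTranspose, Matrix.trace_mul_comm, Matrix.trace,
      Fintype.sum_bool, diag_apply, diag_apply, hdiag, hdiag]
    norm_num
  have hherm : (rhoB PROT1 θ).IsHermitian :=
    rhoB_eq_ampMatrix_mul_conjTranspose PROT1 θ ▸ W.isHermitian_mul_conjTranspose_self
  rw [leakReg, vNE_eq_binEnt_quarter rfl hherm htr hroots, mutualInfo_PROT1]
end
end

section
/- (Asymptotic leakage of randomized Rabin string OT.) For every r ≥ 1 and every phase function θ, the leakage of the regular embedding ψ_θ of the primitive P^{ROT_r} satisfies Δ(ψ_θ) ≥ 1 − (r+3)/2^r (an explicit form of the paper's bound Δ ≥ 1 − O(r·2^{−r})). -/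
open scoped BigOperators
open Matrix

noncomputable section

/-!
Write `ρ_B = Φ Φᴴ`, where `Φ` is the amplitude matrix of `ψ_θ`. For `P^{ROT_r}` the Gram matrix
`Φᴴ Φ` is `a (1 + J)` with `a = 2^{-(r+1)}` and `J = ē eᵀ` built from the unimodular phases
`e x = exp(i θ(x, ⊥))`, so `J² = 2^r J` and `Φᴴ Φ` satisfies a quadratic equation. Hence
`ρ_B (ρ_B - a)(ρ_B - a - 1/2) = 0` whatever `θ` is, and the spectrum of `ρ_B` is pinned down by
`tr ρ_B = 1` and `tr ρ_B² = 3a/2 + 1/4`. This gives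
`S(ρ_B) = (1/2 - a)(r + 1) - (a + 1/2) log₂(a + 1/2)`; with `I(X;Y) = r/2` the leakage is
`1 - r a - (a + 1/2) log₂(1 + 2a)`, and `log₂(1 + x) ≤ 2x` yields the bound.
-/

open Polynomial

namespace Matrix.IsHermitian

variable {𝕜 n : Type*} [RCLike 𝕜] [Fintype n] [DecidableEq n] {A : Matrix n n 𝕜}

theorem trace_pow_eq_sum_eigenvalues_pow (hA : A.IsHermitian) (k : ℕ) :
    (A ^ k).trace = ∑ i, (hA.eigenvalues i : 𝕜) ^ k := by
  conv_lhs => rw [hA.spectral_theorem, ← map_pow, Unitary.conjStarAlgAut_apply, trace_mul_cycle,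
    Unitary.coe_star_mul_self, one_mul, diagonal_pow, trace_diagonal]
  rfl

theorem eval_eigenvalues_eq_zero_of_aeval_eq_zero (hA : A.IsHermitian) {p : ℝ[X]}
    (hp : aeval A p = 0) (i : n) : p.eval (hA.eigenvalues i) = 0 := by
  have : Nonempty n := ⟨i⟩
  simpa [hp, spectrum.zero_eq] using
    spectrum.subset_polynomial_aeval A p ⟨_, hA.eigenvalues_mem_spectrum_real i, rfl⟩

end Matrix.IsHermitian

namespace Matrix

variable {m k R : Type*} [Fintype m] [DecidableEq m] [Fintype k] [DecidableEq k] [CommRing R]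

theorem mul_pow_three_eq_of_mul_sq_eq {Φ : Matrix m k R} {Ψ : Matrix k m R} {s t : R}
    (h : (Ψ * Φ) ^ 2 = s • (Ψ * Φ) + t • 1) :
    (Φ * Ψ) ^ 3 = s • (Φ * Ψ) ^ 2 + t • (Φ * Ψ) := by
  calc (Φ * Ψ) ^ 3 = Φ * (Ψ * Φ) ^ 2 * Ψ := by
        simp only [pow_succ, pow_zero, Matrix.one_mul, Matrix.mul_assoc]
    _ = s • (Φ * Ψ) ^ 2 + t • (Φ * Ψ) := by
      rw [h, Matrix.mul_add, Matrix.add_mul, Matrix.mul_smul, Matrix.smul_mul, Matrix.mul_smul,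
        Matrix.smul_mul, Matrix.mul_one]
      simp only [sq, Matrix.mul_assoc]

theorem trace_mul_sq_comm (Φ : Matrix m k R) (Ψ : Matrix k m R) :
    ((Φ * Ψ) ^ 2).trace = ((Ψ * Φ) ^ 2).trace := by
  rw [sq, sq, Matrix.mul_assoc, trace_mul_comm]
  simp only [Matrix.mul_assoc]

end Matrix

theorem sq_smul_one_add_of_sq_eq_smul {R A : Type*} [CommRing R] [Ring A] [Algebra R A]
    {J : A} {N : R} (hJ : J ^ 2 = N • J) (a : R) :
    (a • (1 + J)) ^ 2 = (a * (N + 2)) • (a • (1 + J)) - (a ^ 2 * (N + 1)) • 1 := by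
  rw [_root_.smul_pow, (Commute.one_left J).add_sq, hJ, one_pow, mul_one, two_mul]
  module

theorem vecMulVec_star_self_sq {X : Type*} [Fintype X] [DecidableEq X] {e : X → ℂ}
    (he : ∀ x, star (e x) * e x = 1) :
    vecMulVec (star e) e ^ 2 = (Fintype.card X : ℂ) • vecMulVec (star e) e := by
  rw [sq, vecMulVec_mul_vecMulVec, dotProduct]
  simp only [Pi.star_apply, mul_comm (e _), he, Finset.sum_const, Finset.card_univ, nsmul_eq_mul,
    mul_one, vecMulVec_smul]

-- `vNE` reads the eigenvalues off with the classical `DecidableEq` instance.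
theorem Matrix.IsHermitian.vNE_eq_s8 {n : Type*} [Fintype n] [DecidableEq n] {A : Matrix n n ℂ}
    (hA : A.IsHermitian) :
    vNE A = -∑ i, hA.eigenvalues i * Real.logb 2 (hA.eigenvalues i) := by
  rw [vNE, dif_pos hA]
  congr!

theorem Complex.star_exp_I_mul_ofReal_mul_self (t : ℝ) :
    star (Complex.exp (Complex.I * t)) * Complex.exp (Complex.I * t) = 1 := by
  rw [Complex.star_def, Complex.conj_mul', mul_comm, Complex.norm_exp_ofReal_mul_I]
  simp

theorem Real.logb_two_one_add_le {x : ℝ} (hx : 0 ≤ x) : Real.logb 2 (1 + x) ≤ 2 * x := by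
  have hlog : Real.log (1 + x) ≤ x := by
    linarith [Real.log_le_sub_one_of_pos (show 0 < 1 + x by linarith)]
  rw [Real.logb, div_le_iff₀ (Real.log_pos one_lt_two)]
  nlinarith [Real.log_two_gt_d9]

section Amplitude

variable {X Y : Type*} [Fintype X]

def amplitude (P θ : X × Y → ℝ) : Matrix Y X ℂ := of fun y x => regEmb P θ (x, y)

theorem rhoB_eq_amplitude_mul_conjTranspose (P θ : X × Y → ℝ) :
    rhoB P θ = amplitude P θ * (amplitude P θ)ᴴ := by
  ext y y'
  simp [rhoB, amplitude, mul_apply]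

end Amplitude

section PROT
variable (r : ℕ) (θ : (Fin r → Bool) × ((Fin r → Bool) ⊕ Unit) → ℝ)

theorem amplitude_PROT : amplitude (PROT r) θ = ((√(1 / 2 ^ (r + 1)) : ℝ) : ℂ) •
    fromRows (diagonal fun x => Complex.exp (Complex.I * θ (x, Sum.inl x)))
      (replicateRow Unit fun x => Complex.exp (Complex.I * θ (x, Sum.inr ()))) := by
  ext (y | u) x
  · by_cases h : y = x <;> simp [amplitude, regEmb, PROT, h, mul_comm]
  · simp [amplitude, regEmb, PROT, mul_comm]

theorem gram_PROT :
    (amplitude (PROT r) θ)ᴴ * amplitude (PROT r) θ =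
      (1 / 2 ^ (r + 1) : ℂ) •
        (1 + vecMulVec (star fun x => Complex.exp (Complex.I * θ (x, Sum.inr ())))
          fun x => Complex.exp (Complex.I * θ (x, Sum.inr ()))) := by
  rw [amplitude_PROT, conjTranspose_smul, Matrix.smul_mul, Matrix.mul_smul, smul_smul,
    conjTranspose_fromRows_eq_fromCols_conjTranspose, fromCols_mul_fromRows, diagonal_conjTranspose,
    diagonal_mul_diagonal, conjTranspose_replicateRow, ← vecMulVec_eq]
  congr 1
  · rw [Complex.star_def, Complex.conj_ofReal, ← Complex.ofReal_mul,
      Real.mul_self_sqrt (by positivity)]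
    push_cast
    rfl
  · rw [← diagonal_one]
    congr
    ext x
    exact Complex.star_exp_I_mul_ofReal_mul_self _

theorem gram_PROT_sq :
    ((amplitude (PROT r) θ)ᴴ * amplitude (PROT r) θ) ^ 2 =
      (2 * (1 / 2 ^ (r + 1)) + 1 / 2 : ℂ) • ((amplitude (PROT r) θ)ᴴ * amplitude (PROT r) θ) +
        (-((1 / 2 ^ (r + 1)) * (1 / 2 ^ (r + 1) + 1 / 2)) : ℂ) • 1 := by
  rw [gram_PROT, sq_smul_one_add_of_sq_eq_smul
    (vecMulVec_star_self_sq fun x => Complex.star_exp_I_mul_ofReal_mul_self _), sub_eq_add_neg,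
    ← neg_smul, Fintype.card_fun, Fintype.card_bool, Fintype.card_fin]
  congr 3 <;> push_cast <;> field_simp <;> ring

theorem trace_gram_PROT :
    ((amplitude (PROT r) θ)ᴴ * amplitude (PROT r) θ).trace = 1 := by
  rw [gram_PROT, trace_smul, trace_add, trace_one, trace_vecMulVec, dotProduct]
  simp only [Pi.star_apply, Complex.star_exp_I_mul_ofReal_mul_self, Finset.sum_const,
    Finset.card_univ, nsmul_eq_mul, mul_one, Fintype.card_fun, Fintype.card_bool, Fintype.card_fin,
    smul_eq_mul]
  push_cast
  field_simp
  ring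

theorem rhoB_PROT_pow_three :
    rhoB (PROT r) θ ^ 3 = (2 * (1 / 2 ^ (r + 1)) + 1 / 2 : ℂ) • rhoB (PROT r) θ ^ 2 +
      (-((1 / 2 ^ (r + 1)) * (1 / 2 ^ (r + 1) + 1 / 2)) : ℂ) • rhoB (PROT r) θ := by
  rw [rhoB_eq_amplitude_mul_conjTranspose]
  exact mul_pow_three_eq_of_mul_sq_eq (gram_PROT_sq r θ)

theorem trace_rhoB_PROT : (rhoB (PROT r) θ).trace = 1 := by
  rw [rhoB_eq_amplitude_mul_conjTranspose, trace_mul_comm, trace_gram_PROT]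

theorem trace_rhoB_PROT_sq :
    (rhoB (PROT r) θ ^ 2).trace = 3 / 2 * (1 / 2 ^ (r + 1)) + 1 / 4 := by
  rw [rhoB_eq_amplitude_mul_conjTranspose, trace_mul_sq_comm, gram_PROT_sq, trace_add,
    trace_smul, trace_smul, trace_gram_PROT, trace_one, Fintype.card_fun, Fintype.card_bool,
    Fintype.card_fin, smul_eq_mul, smul_eq_mul]
  push_cast
  field_simp
  ring

theorem eigenvalues_rhoB_PROT (hρ : (rhoB (PROT r) θ).IsHermitian)
    (i : (Fin r → Bool) ⊕ Unit) :
    hρ.eigenvalues i = 0 ∨ hρ.eigenvalues i = 1 / 2 ^ (r + 1) ∨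
      hρ.eigenvalues i = 1 / 2 ^ (r + 1) + 1 / 2 := by
  set a : ℝ := 1 / 2 ^ (r + 1)
  have hroot := hρ.eval_eigenvalues_eq_zero_of_aeval_eq_zero
    (p := X ^ 3 - (2 * a + 1 / 2) • X ^ 2 + (a * (a + 1 / 2)) • X) ?_ i
  · simp only [eval_add, eval_sub, eval_smul, eval_pow, eval_X, smul_eq_mul] at hroot
    have hfactor :
        hρ.eigenvalues i * (hρ.eigenvalues i - a) * (hρ.eigenvalues i - (a + 1 / 2)) = 0 := by
      linear_combination hroot
    simp only [mul_eq_zero, sub_eq_zero] at hfactor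
    tauto
  · simp only [map_add, map_sub, map_smul, aeval_X_pow, aeval_X]
    rw [rhoB_PROT_pow_three]
    simp only [RCLike.real_smul_eq_coe_smul (K := ℂ)]
    push_cast [a]
    module

theorem sum_eigenvalues_rhoB_PROT (hρ : (rhoB (PROT r) θ).IsHermitian) :
    ∑ i, hρ.eigenvalues i = 1 := by
  have h := hρ.trace_eq_sum_eigenvalues.symm.trans (trace_rhoB_PROT r θ)
  rw [RCLike.ofReal_eq_complex_ofReal] at h
  exact Complex.ofReal_injective (by push_cast; exact h)

theorem sum_eigenvalues_sq_rhoB_PROT (hρ : (rhoB (PROT r) θ).IsHermitian) :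
    ∑ i, hρ.eigenvalues i ^ 2 = 3 / 2 * (1 / 2 ^ (r + 1)) + 1 / 4 := by
  have h := (hρ.trace_pow_eq_sum_eigenvalues_pow 2).symm.trans (trace_rhoB_PROT_sq r θ)
  rw [RCLike.ofReal_eq_complex_ofReal] at h
  exact Complex.ofReal_injective (by push_cast; exact h)

theorem vNE_rhoB_PROT :
    vNE (rhoB (PROT r) θ) = (1 / 2 - 1 / 2 ^ (r + 1)) * (r + 1) -
      (1 / 2 ^ (r + 1) + 1 / 2) * Real.logb 2 (1 / 2 ^ (r + 1) + 1 / 2) := by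
  have hρ : (rhoB (PROT r) θ).IsHermitian := by
    rw [rhoB_eq_amplitude_mul_conjTranspose]
    exact isHermitian_mul_conjTranspose_self _
  set a : ℝ := 1 / 2 ^ (r + 1)
  set b : ℝ := a + 1 / 2
  have hloga : Real.logb 2 a = -(r + 1) := by
    simp [a, Real.logb_pow]
  set c₂ := 2 * (Real.logb 2 b - Real.logb 2 a)
  set c₁ := Real.logb 2 a - c₂ * a
  -- `λ ↦ λ log₂ λ` agrees with a quadratic polynomial on the three-point spectrum `{0, a, b}`
  have hinterp : ∀ i, hρ.eigenvalues i * Real.logb 2 (hρ.eigenvalues i) =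
      c₁ * hρ.eigenvalues i + c₂ * hρ.eigenvalues i ^ 2 := by
    intro i
    rcases eigenvalues_rhoB_PROT r θ hρ i with h | h | h <;> rw [h]
    · simp
    · ring
    · simp only [c₁, c₂, b]
      ring
  rw [hρ.vNE_eq_s8, Finset.sum_congr rfl fun i _ => hinterp i, Finset.sum_add_distrib,
    ← Finset.mul_sum, ← Finset.mul_sum, sum_eigenvalues_rhoB_PROT r θ hρ,
    sum_eigenvalues_sq_rhoB_PROT r θ hρ]
  simp only [c₁, c₂, b, hloga]
  ring

end PROT

section MutualInfo
variable (r : ℕ)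

theorem margX_PROT (x : Fin r → Bool) : margX (PROT r) x = 2 * (1 / 2 ^ (r + 1)) := by
  simp [margX, PROT, Fintype.sum_sum_type, two_mul]

theorem margY_PROT_inl (y : Fin r → Bool) : margY (PROT r) (Sum.inl y) = 1 / 2 ^ (r + 1) := by
  simp [margY, PROT]

theorem margY_PROT_inr (u : Unit) : margY (PROT r) (Sum.inr u) = 1 / 2 := by
  simp only [margY, PROT, Finset.sum_const, Finset.card_univ, Fintype.card_pi, Fintype.card_bool,
    Finset.prod_const, Fintype.card_fin, nsmul_eq_mul, Nat.cast_pow, Nat.cast_ofNat]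
  field_simp
  ring

theorem mutualInfo_PROT : mutualInfo (PROT r) = r / 2 := by
  simp only [mutualInfo, PROT, one_div, margX_PROT, Fintype.sum_sum_type, margY_PROT_inl, ite_mul,
    zero_mul, Finset.sum_ite_eq', Finset.mem_univ, ↓reduceIte, Finset.univ_unique,
    PUnit.default_eq_unit, margY_PROT_inr, Finset.sum_const, Finset.card_singleton, one_smul,
    Finset.card_univ, Fintype.card_pi, Fintype.card_bool, Finset.prod_const, Fintype.card_fin,
    smul_add, nsmul_eq_mul, Nat.cast_pow, Nat.cast_ofNat]
  have h₁ : (2 ^ (r + 1) : ℝ)⁻¹ / (2 * (2 ^ (r + 1))⁻¹ * (2 ^ (r + 1))⁻¹) = 2 ^ r := by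
    field_simp
    ring
  have h₂ : (2 ^ (r + 1) : ℝ)⁻¹ / (2 * (2 ^ (r + 1))⁻¹ * 2⁻¹) = 1 := by
    field_simp
  rw [h₁, h₂, Real.logb_one, Real.logb_pow, Real.logb_self_eq_one one_lt_two]
  field_simp
  ring

end MutualInfo

theorem leakReg_PROT (r : ℕ) (θ : (Fin r → Bool) × ((Fin r → Bool) ⊕ Unit) → ℝ) :
    leakReg (PROT r) θ =
      1 - r * (1 / 2 ^ (r + 1)) -
        (1 / 2 ^ (r + 1) + 1 / 2) * Real.logb 2 (1 + 2 * (1 / 2 ^ (r + 1))) := by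
  have hb : (1 / 2 ^ (r + 1) + 1 / 2 : ℝ) = (1 + 2 * (1 / 2 ^ (r + 1))) / 2 := by ring
  rw [leakReg, vNE_rhoB_PROT, mutualInfo_PROT, hb, Real.logb_div (by positivity) two_ne_zero,
    Real.logb_self_eq_one one_lt_two]
  ring

theorem leakage_PROT_asymptotic_general (r : ℕ)
    (θ : (Fin r → Bool) × ((Fin r → Bool) ⊕ Unit) → ℝ) :
    1 - ((r : ℝ) + 3) / 2 ^ r ≤ leakReg (PROT r) θ := by
  rw [leakReg_PROT]
  set a : ℝ := 1 / 2 ^ (r + 1)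
  have ha : 0 < a := by positivity
  have ha_le : a ≤ 1 / 2 :=
    one_div_le_one_div_of_le two_pos (le_self_pow₀ one_le_two r.succ_ne_zero)
  have hbound : ((r : ℝ) + 3) / 2 ^ r = (r + 3) * (2 * a) := by
    simp only [a, pow_succ]
    field_simp
  have hlog := Real.logb_two_one_add_le (by positivity : 0 ≤ 2 * a)
  rw [hbound]
  nlinarith [mul_le_mul_of_nonneg_left hlog (by positivity : (0 : ℝ) ≤ a + 1 / 2)]

/-- **Asymptotic leakage of randomized Rabin string OT.** For every `r ≥ 1`
and every phase function `θ`, the leakage of the regular embedding `ψ_θ` of `P^{ROT_r}`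
satisfies `Δ(ψ_θ) ≥ 1 − (r+3)/2^r`. -/
theorem leakage_PROT_asymptotic (r : ℕ) (hr : 1 ≤ r)
    (θ : (Fin r → Bool) × ((Fin r → Bool) ⊕ Unit) → ℝ) :
    1 - ((r : ℝ) + 3) / 2 ^ r ≤ leakReg (PROT r) θ :=
  leakage_PROT_asymptotic_general r θ
end
end
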